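/- arXiv:2205.04941 — 7 statements merged into one kernel-verified Lean document; each statement's English description precedes it below -/
import Mathlib

section
/- Let q ∈ [1, ∞), a ∈ (0, ∞], and σ < 1 − 1/q. Then for every measurable function f : (0, a) → ℝ one has (∫_0^a t^{qσ} | (1/t) ∫_0^t f(s) ds |^q dt)^{1/q} ≤ (1 − 1/q − σ)^{−1} (∫_0^a |f(t)|^q t^{qσ} dt)^{1/q}. -/
/-!
Put `c = 1 - 1/q - σ > 0`. Hölder's inequality against the weight `s ^ (c - 1)` gives
`(∫₀ᵗ |f|) ^ q ≤ (t ^ c / c) ^ (q - 1) * ∫₀ᵗ s ^ ((q - 1) (1 - c)) |f s| ^ q`.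
Multiplying by `t ^ (qσ - q)` leaves the weight `c ^ (1 - q) * t ^ (-c - 1)`; after exchanging the
order of integration, the inner integral `∫ₛ^∞ t ^ (-c - 1) dt = s ^ (-c) / c` turns the weight of
`|f s| ^ q` into exactly `s ^ (qσ)`, at the cost of the constant `c ^ (-q)`.
-/

open MeasureTheory ENNReal Set

lemma lintegral_Ioo_zero_ofReal_rpow_sub_one {c t : ℝ} (hc : 0 < c) (ht : 0 < t) :
    ∫⁻ s in Ioo 0 t, ENNReal.ofReal (s ^ (c - 1)) = ENNReal.ofReal (t ^ c / c) := by
  have hr : -1 < c - 1 := by linarith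
  have hint : IntegrableOn (fun s : ℝ => s ^ (c - 1)) (Ioc 0 t) :=
    (intervalIntegrable_iff_integrableOn_Ioc_of_le ht.le).mp
      (intervalIntegral.intervalIntegrable_rpow' hr)
  rw [← ofReal_integral_eq_lintegral_ofReal (hint.mono_set Ioo_subset_Ioc_self)
      ((ae_restrict_mem measurableSet_Ioo).mono fun s hs => Real.rpow_nonneg hs.1.le _),
    ← integral_Ioc_eq_integral_Ioo, ← intervalIntegral.integral_of_le ht.le,
    integral_rpow (Or.inl hr), sub_add_cancel, Real.zero_rpow hc.ne', sub_zero]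

lemma lintegral_Ioi_ofReal_rpow_neg_sub_one {c s : ℝ} (hc : 0 < c) (hs : 0 < s) :
    ∫⁻ t in Ioi s, ENNReal.ofReal (t ^ (-c - 1)) = ENNReal.ofReal (s ^ (-c) / c) := by
  have hr : -c - 1 < -1 := by linarith
  rw [← ofReal_integral_eq_lintegral_ofReal ((integrableOn_Ioi_rpow_iff hs).mpr hr)
      ((ae_restrict_mem measurableSet_Ioi).mono fun t ht => Real.rpow_nonneg (hs.trans ht).le _),
    integral_Ioi_rpow_of_lt hr hs, sub_add_cancel, neg_div_neg_eq]

lemma rpow_lintegral_mul_le {α : Type*} [MeasurableSpace α] (μ : Measure α) {q : ℝ} (hq : 1 < q)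
    {u v : α → ℝ≥0∞} (hu : AEMeasurable u μ) (hv : AEMeasurable v μ) :
    (∫⁻ x, u x * v x ∂μ) ^ q
      ≤ (∫⁻ x, u x ^ (q / (q - 1)) ∂μ) ^ (q - 1) * ∫⁻ x, v x ^ q ∂μ := by
  have hq0 : 0 < q := by linarith
  have hpq : (q / (q - 1)).HolderConjugate q := (Real.HolderConjugate.conjExponent hq).symm
  calc (∫⁻ x, u x * v x ∂μ) ^ q
      ≤ ((∫⁻ x, u x ^ (q / (q - 1)) ∂μ) ^ (1 / (q / (q - 1))) * (∫⁻ x, v x ^ q ∂μ) ^ (1 / q)) ^ q :=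
        rpow_le_rpow (lintegral_mul_le_Lp_mul_Lq μ hpq hu hv) hq0.le
    _ = (∫⁻ x, u x ^ (q / (q - 1)) ∂μ) ^ (q - 1) * ∫⁻ x, v x ^ q ∂μ := by
        rw [mul_rpow_of_nonneg _ _ hq0.le, ← rpow_mul, ← rpow_mul, one_div_div,
          div_mul_cancel₀ _ hq0.ne', one_div_mul_cancel hq0.ne', rpow_one]

lemma rpow_lintegral_Ioo_zero_le {q c t : ℝ} (hq : 1 ≤ q) (hc : 0 < c) (ht : 0 < t)
    {g : ℝ → ℝ≥0∞} (hg : Measurable g) :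
    (∫⁻ s in Ioo 0 t, g s) ^ q
      ≤ ENNReal.ofReal ((t ^ c / c) ^ (q - 1)) *
        ∫⁻ s in Ioo 0 t, ENNReal.ofReal (s ^ ((q - 1) * (1 - c))) * g s ^ q := by
  rcases hq.eq_or_lt with rfl | hq
  · simp
  set γ : ℝ := (q - 1) * (1 - c) / q
  have hq0 : 0 < q := by linarith
  have hsplit : ∀ s ∈ Ioo (0 : ℝ) t,
      g s = ENNReal.ofReal (s ^ (-γ)) * (ENNReal.ofReal (s ^ γ) * g s) := fun s hs => by
    rw [← mul_assoc, ← ENNReal.ofReal_mul (Real.rpow_nonneg hs.1.le _), ← Real.rpow_add hs.1,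
      neg_add_cancel, Real.rpow_zero, ENNReal.ofReal_one, one_mul]
  have hfirst : ∀ s ∈ Ioo (0 : ℝ) t,
      ENNReal.ofReal (s ^ (-γ)) ^ (q / (q - 1)) = ENNReal.ofReal (s ^ (c - 1)) := fun s hs => by
    rw [ENNReal.ofReal_rpow_of_nonneg (Real.rpow_nonneg hs.1.le _) (by positivity),
      ← Real.rpow_mul hs.1.le]
    have : q - 1 ≠ 0 := by linarith
    congr 2
    simp only [γ]
    field_simp
    ring
  have hsecond : ∀ s ∈ Ioo (0 : ℝ) t, (ENNReal.ofReal (s ^ γ) * g s) ^ q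
      = ENNReal.ofReal (s ^ ((q - 1) * (1 - c))) * g s ^ q := fun s hs => by
    rw [mul_rpow_of_nonneg _ _ hq0.le, ENNReal.ofReal_rpow_of_nonneg (Real.rpow_nonneg hs.1.le _)
      hq0.le, ← Real.rpow_mul hs.1.le, div_mul_cancel₀ _ hq0.ne']
  calc (∫⁻ s in Ioo 0 t, g s) ^ q
      = (∫⁻ s in Ioo 0 t, ENNReal.ofReal (s ^ (-γ)) * (ENNReal.ofReal (s ^ γ) * g s)) ^ q := by
        rw [setLIntegral_congr_fun measurableSet_Ioo hsplit]
    _ ≤ (∫⁻ s in Ioo 0 t, ENNReal.ofReal (s ^ (-γ)) ^ (q / (q - 1))) ^ (q - 1) *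
          ∫⁻ s in Ioo 0 t, (ENNReal.ofReal (s ^ γ) * g s) ^ q :=
        rpow_lintegral_mul_le _ hq (by fun_prop) (by fun_prop)
    _ = _ := by
        rw [setLIntegral_congr_fun measurableSet_Ioo hfirst,
          setLIntegral_congr_fun measurableSet_Ioo hsecond,
          lintegral_Ioo_zero_ofReal_rpow_sub_one hc ht,
          ENNReal.ofReal_rpow_of_nonneg (by positivity) (by linarith)]

lemma setLIntegral_mul_lintegral_Ioo_zero_le {S : Set ℝ} (hS : MeasurableSet S)
    (hS_down : ∀ t ∈ S, Ioo 0 t ⊆ S) {w φ : ℝ → ℝ≥0∞} (hw : Measurable w) (hφ : Measurable φ) :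
    ∫⁻ t in S, w t * ∫⁻ s in Ioo 0 t, φ s ≤ ∫⁻ s in S, φ s * ∫⁻ t in Ioi s, w t := by
  set F : ℝ × ℝ → ℝ≥0∞ := {p | 0 < p.2 ∧ p.2 < p.1}.indicator fun p => w p.1 * φ p.2
  have hF : Measurable F := by
    refine Measurable.indicator (by fun_prop) ?_
    exact (measurableSet_lt measurable_const measurable_snd).inter
      (measurableSet_lt measurable_snd measurable_fst)
  have hF_slice : ∀ t ∈ S, w t * ∫⁻ s in Ioo 0 t, φ s = ∫⁻ s in S, F (t, s) := fun t ht => by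
    have : ∀ s, F (t, s) = (Ioo 0 t).indicator (fun s => w t * φ s) s := fun s => by
      simp only [F, indicator_apply, mem_ofPred_eq, mem_Ioo]
    simp_rw [this]
    rw [lintegral_indicator measurableSet_Ioo, Measure.restrict_restrict measurableSet_Ioo,
      inter_eq_left.mpr (hS_down t ht), lintegral_const_mul _ hφ]
  have hF_le : ∀ t s, F (t, s) ≤ (Ioi s).indicator (fun t => w t * φ s) t := fun t s => by
    simp only [F, indicator_apply, mem_ofPred_eq, mem_Ioi]
    split_ifs with h h' <;> simp_all
  calc ∫⁻ t in S, w t * ∫⁻ s in Ioo 0 t, φ s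
      = ∫⁻ t in S, ∫⁻ s in S, F (t, s) := setLIntegral_congr_fun hS hF_slice
    _ = ∫⁻ s in S, ∫⁻ t in S, F (t, s) := lintegral_lintegral_swap hF.aemeasurable
    _ ≤ ∫⁻ s in S, ∫⁻ t, (Ioi s).indicator (fun t => w t * φ s) t :=
        lintegral_mono fun s => (setLIntegral_le_lintegral S _).trans (lintegral_mono (hF_le · s))
    _ = ∫⁻ s in S, φ s * ∫⁻ t in Ioi s, w t := by
        simp_rw [lintegral_indicator measurableSet_Ioi, lintegral_mul_const _ hw, mul_comm]

lemma lintegral_mul_rpow_lintegral_Ioo_zero_le {q c : ℝ} (hq : 1 ≤ q) (hc : 0 < c)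
    {S : Set ℝ} (hS : MeasurableSet S) (hS_pos : S ⊆ Ioi 0) (hS_down : ∀ t ∈ S, Ioo 0 t ⊆ S)
    {g : ℝ → ℝ≥0∞} (hg : Measurable g) :
    ∫⁻ t in S, ENNReal.ofReal (t ^ (-1 - q * c)) * (∫⁻ s in Ioo 0 t, g s) ^ q
      ≤ ENNReal.ofReal (c ^ (-q)) * ∫⁻ t in S, ENNReal.ofReal (t ^ (q - 1 - q * c)) * g t ^ q := by
  set φ : ℝ → ℝ≥0∞ := fun s => ENNReal.ofReal (s ^ ((q - 1) * (1 - c))) * g s ^ q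
  have hweight : ∀ t ∈ S, ENNReal.ofReal (t ^ (-1 - q * c)) * ENNReal.ofReal ((t ^ c / c) ^ (q - 1))
      = ENNReal.ofReal (c ^ (1 - q)) * ENNReal.ofReal (t ^ (-c - 1)) := fun t ht => by
    have ht : 0 < t := hS_pos ht
    rw [← ENNReal.ofReal_mul (by positivity), ← ENNReal.ofReal_mul (by positivity),
      Real.div_rpow (by positivity) hc.le, ← Real.rpow_mul ht.le, mul_div_assoc',
      ← Real.rpow_add ht, div_eq_mul_inv, ← Real.rpow_neg hc.le, neg_sub, mul_comm]
    ring_nf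
  have hdensity : ∀ s ∈ S, φ s * ENNReal.ofReal (s ^ (-c) / c)
      = ENNReal.ofReal c⁻¹ * (ENNReal.ofReal (s ^ (q - 1 - q * c)) * g s ^ q) := fun s hs => by
    have hs : 0 < s := hS_pos hs
    rw [mul_right_comm, ← ENNReal.ofReal_mul (by positivity), mul_div_assoc', div_eq_inv_mul,
      ← Real.rpow_add hs, ENNReal.ofReal_mul (by positivity), mul_assoc]
    ring_nf
  calc ∫⁻ t in S, ENNReal.ofReal (t ^ (-1 - q * c)) * (∫⁻ s in Ioo 0 t, g s) ^ q
      ≤ ∫⁻ t in S, ENNReal.ofReal (t ^ (-1 - q * c)) *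
          (ENNReal.ofReal ((t ^ c / c) ^ (q - 1)) * ∫⁻ s in Ioo 0 t, φ s) :=
        setLIntegral_mono' hS fun t ht => by
          gcongr
          exact rpow_lintegral_Ioo_zero_le hq hc (hS_pos ht) hg
    _ = ENNReal.ofReal (c ^ (1 - q)) *
          ∫⁻ t in S, ENNReal.ofReal (t ^ (-c - 1)) * ∫⁻ s in Ioo 0 t, φ s := by
        rw [← lintegral_const_mul' _ _ ofReal_ne_top]
        refine setLIntegral_congr_fun hS fun t ht => ?_
        rw [← mul_assoc, hweight t ht, mul_assoc]
    _ ≤ ENNReal.ofReal (c ^ (1 - q)) *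
          ∫⁻ s in S, φ s * ∫⁻ t in Ioi s, ENNReal.ofReal (t ^ (-c - 1)) := by
        have hw : Measurable fun t : ℝ => ENNReal.ofReal (t ^ (-c - 1)) := by fun_prop
        have hφ : Measurable φ := by fun_prop
        exact mul_le_mul_right (setLIntegral_mul_lintegral_Ioo_zero_le hS hS_down hw hφ) _
    _ = ENNReal.ofReal (c ^ (1 - q)) *
          (ENNReal.ofReal c⁻¹ * ∫⁻ s in S, ENNReal.ofReal (s ^ (q - 1 - q * c)) * g s ^ q) := by
        congr 1
        rw [← lintegral_const_mul' _ _ ofReal_ne_top]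
        refine setLIntegral_congr_fun hS fun s hs => ?_
        rw [lintegral_Ioi_ofReal_rpow_neg_sub_one hc (hS_pos hs), hdensity s hs]
    _ = _ := by
        rw [← mul_assoc, ← ENNReal.ofReal_mul (by positivity), ← Real.rpow_neg_one,
          ← Real.rpow_add hc, sub_add_eq_add_sub, add_neg_cancel, zero_sub]

lemma ofReal_rpow_mul_abs_average_le {q r t : ℝ} (hq : 0 ≤ q) (ht : 0 < t) (f : ℝ → ℝ) :
    ENNReal.ofReal (t ^ r * |(1 / t) * ∫ s in Ioo 0 t, f s| ^ q)
      ≤ ENNReal.ofReal (t ^ (r - q)) * (∫⁻ s in Ioo 0 t, ENNReal.ofReal |f s|) ^ q := by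
  have hreal : t ^ r * |(1 / t) * ∫ s in Ioo 0 t, f s| ^ q
      = t ^ (r - q) * |∫ s in Ioo 0 t, f s| ^ q := by
    rw [abs_mul, abs_of_pos (one_div_pos.mpr ht), Real.mul_rpow (by positivity) (abs_nonneg _),
      one_div, Real.inv_rpow ht.le, ← mul_assoc, ← div_eq_mul_inv, ← Real.rpow_sub ht]
  rw [hreal, ENNReal.ofReal_mul (by positivity),
    ← ENNReal.ofReal_rpow_of_nonneg (abs_nonneg _) hq]
  gcongr
  calc ENNReal.ofReal |∫ s in Ioo 0 t, f s| = ‖∫ s in Ioo 0 t, f s‖ₑ :=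
        (Real.enorm_eq_ofReal_abs _).symm
    _ ≤ ∫⁻ s in Ioo 0 t, ‖f s‖ₑ := enorm_integral_le_lintegral_enorm _
    _ = ∫⁻ s in Ioo 0 t, ENNReal.ofReal |f s| := by simp_rw [Real.enorm_eq_ofReal_abs]

lemma lintegral_rpow_mul_abs_average_le {q σ : ℝ} (hq : 1 ≤ q) (hσ : σ < 1 - 1 / q)
    {S : Set ℝ} (hS : MeasurableSet S) (hS_pos : S ⊆ Ioi 0) (hS_down : ∀ t ∈ S, Ioo 0 t ⊆ S)
    {f : ℝ → ℝ} (hf : Measurable f) :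
    ∫⁻ t in S, ENNReal.ofReal (t ^ (q * σ) * |(1 / t) * ∫ s in Ioo 0 t, f s| ^ q)
      ≤ ENNReal.ofReal ((1 - 1 / q - σ) ^ (-q)) *
        ∫⁻ t in S, ENNReal.ofReal (|f t| ^ q * t ^ (q * σ)) := by
  have hq0 : 0 < q := by linarith
  have hexp : q * σ = q - 1 - q * (1 - 1 / q - σ) := by field_simp; ring
  calc _ ≤ ∫⁻ t in S, ENNReal.ofReal (t ^ (q * σ - q)) *
          (∫⁻ s in Ioo 0 t, ENNReal.ofReal |f s|) ^ q :=
        setLIntegral_mono' hS fun t ht => ofReal_rpow_mul_abs_average_le hq0.le (hS_pos ht) f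
    _ ≤ ENNReal.ofReal ((1 - 1 / q - σ) ^ (-q)) *
          ∫⁻ t in S, ENNReal.ofReal (t ^ (q * σ)) * ENNReal.ofReal |f t| ^ q := by
        rw [hexp, sub_right_comm, sub_sub_cancel_left]
        exact lintegral_mul_rpow_lintegral_Ioo_zero_le hq (sub_pos.mpr hσ) hS hS_pos hS_down
          hf.abs.ennreal_ofReal
    _ = _ := by
        congr 1
        refine lintegral_congr fun t => ?_
        rw [mul_comm, ENNReal.ofReal_mul (by positivity),
          ENNReal.ofReal_rpow_of_nonneg (abs_nonneg _) hq0.le]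

theorem hardy_inequality_general (q σ : ℝ) (a : ℝ≥0∞) (hq : 1 ≤ q)
    (hσ : σ < 1 - 1 / q) (f : ℝ → ℝ) (hf : Measurable f) :
    (∫⁻ t in {t : ℝ | 0 < t ∧ ENNReal.ofReal t < a},
        ENNReal.ofReal (t ^ (q * σ) * |(1 / t) * ∫ s in Set.Ioo 0 t, f s| ^ q)) ^ (1 / q)
      ≤ ENNReal.ofReal ((1 - 1 / q - σ)⁻¹) *
        (∫⁻ t in {t : ℝ | 0 < t ∧ ENNReal.ofReal t < a},
          ENNReal.ofReal (|f t| ^ q * t ^ (q * σ))) ^ (1 / q) := by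
  have hq0 : 0 < q := by linarith
  have hc : 0 < 1 - 1 / q - σ := sub_pos.mpr hσ
  have hS : MeasurableSet {t : ℝ | 0 < t ∧ ENNReal.ofReal t < a} :=
    measurableSet_Ioi.inter (ENNReal.measurable_ofReal measurableSet_Iio)
  have hS_down : ∀ t ∈ {t : ℝ | 0 < t ∧ ENNReal.ofReal t < a},
      Ioo 0 t ⊆ {t : ℝ | 0 < t ∧ ENNReal.ofReal t < a} := fun t ht s hs =>
    ⟨hs.1, (ENNReal.ofReal_le_ofReal hs.2.le).trans_lt ht.2⟩
  calc _ ≤ (ENNReal.ofReal ((1 - 1 / q - σ) ^ (-q)) *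
          ∫⁻ t in {t : ℝ | 0 < t ∧ ENNReal.ofReal t < a},
            ENNReal.ofReal (|f t| ^ q * t ^ (q * σ))) ^ (1 / q) :=
        rpow_le_rpow (lintegral_rpow_mul_abs_average_le hq hσ hS (fun t ht => ht.1) hS_down hf)
          (by positivity)
    _ = _ := by
        rw [mul_rpow_of_nonneg _ _ (by positivity),
          ENNReal.ofReal_rpow_of_nonneg (by positivity) (by positivity), ← Real.rpow_mul hc.le,
          neg_mul, mul_one_div_cancel hq0.ne', Real.rpow_neg_one]

/-- Weighted Hardy inequality on (0, a), where `a ∈ (0, ∞]` is an extended real.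
Both sides are interpreted in the extended nonnegative reals. -/
theorem hardy_inequality (q σ : ℝ) (a : ℝ≥0∞) (hq : 1 ≤ q) (ha : 0 < a)
    (hσ : σ < 1 - 1 / q) (f : ℝ → ℝ) (hf : Measurable f) :
    (∫⁻ t in {t : ℝ | 0 < t ∧ ENNReal.ofReal t < a},
        ENNReal.ofReal (t ^ (q * σ) * |(1 / t) * ∫ s in Set.Ioo 0 t, f s| ^ q)) ^ (1 / q)
      ≤ ENNReal.ofReal ((1 - 1 / q - σ)⁻¹) *
        (∫⁻ t in {t : ℝ | 0 < t ∧ ENNReal.ofReal t < a},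
          ENNReal.ofReal (|f t| ^ q * t ^ (q * σ))) ^ (1 / q) :=
  hardy_inequality_general q σ a hq hσ f hf
end

section
/- Let p, q ∈ [1, ∞) and α < q − 1. There exists N = N(q, α) > 0 such that for every function u : ℝ^d × [0,1] → ℝ continuously differentiable up to the boundary and every y ∈ (0,1), ‖u(·,0)‖_{L_p(ℝ^d)} ≤ ‖u(·,y)‖_{L_p(ℝ^d)} + N y^{1 − (1+α)/q} ‖D_y u‖_{L_{p,q}(ℝ^d×(0,y), μ)}, where D_y u denotes the partial derivative of u in the last (vertical) variable. -/
open MeasureTheory ENNReal Set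

/-!
Along each vertical line the fundamental theorem of calculus gives
`|u(x,0)| ≤ |u(x,y)| + ∫₀^y |D_y u(x,s)| ds`. Taking `L_p` norms in `x`, Minkowski's inequality
and then Minkowski's integral inequality bound `‖u(·,0)‖_p` by
`‖u(·,y)‖_p + ∫₀^y ‖D_y u(·,s)‖_p ds`. Finally Hölder's inequality against the weight `s^α` bounds
this integral by `N y^{1-(1+α)/q}` times the mixed norm; the dual weight `s^{-α/(q-1)}` is
integrable at `0` exactly because `α < q - 1`.
-/

section Minkowski

variable {X Y : Type*} [MeasurableSpace X] [MeasurableSpace Y] {μ : Measure X} {ν : Measure Y}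

theorem ENNReal.rpow_one_div_le_of_le_mul_rpow {p q : ℝ} (hpq : p.HolderConjugate q)
    {a R : ℝ≥0∞} (ha : a ≠ ∞) (h : a ≤ R * a ^ (1 / q)) : a ^ (1 / p) ≤ R := by
  rcases eq_or_ne a 0 with rfl | ha0
  · simp [ENNReal.zero_rpow_of_pos (inv_pos.2 hpq.pos)]
  have hsplit : a = a ^ (1 / p) * a ^ (1 / q) := by
    rw [← ENNReal.rpow_add _ _ ha0 ha, one_div, one_div, hpq.inv_add_inv_eq_one,
      ENNReal.rpow_one]
  nth_rewrite 1 [hsplit] at h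
  exact (ENNReal.mul_le_mul_iff_left (ENNReal.rpow_pos (pos_iff_ne_zero.2 ha0) ha).ne'
    (ENNReal.rpow_ne_top_of_nonneg (one_div_pos.2 hpq.symm.pos).le ha)).1 h

theorem lintegral_rpow_one_div_le_of_le_lintegral [SFinite μ] [SFinite ν] {p : ℝ} (hp : 1 < p)
    {F : X × Y → ℝ≥0∞} (hF : Measurable F) {g : X → ℝ≥0∞} (hg : Measurable g)
    (hgF : ∀ x, g x ≤ ∫⁻ s, F (x, s) ∂ν) (hfin : ∫⁻ x, g x ^ p ∂μ ≠ ∞) :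
    (∫⁻ x, g x ^ p ∂μ) ^ (1 / p) ≤ ∫⁻ s, (∫⁻ x, F (x, s) ^ p ∂μ) ^ (1 / p) ∂ν := by
  have hpq := Real.HolderConjugate.conjExponent hp
  refine ENNReal.rpow_one_div_le_of_le_mul_rpow hpq hfin ?_
  calc ∫⁻ x, g x ^ p ∂μ = ∫⁻ x, g x * g x ^ (p - 1) ∂μ := by
        refine lintegral_congr fun x => ?_
        nth_rewrite 2 [← ENNReal.rpow_one (g x)]
        rw [← ENNReal.rpow_add_of_nonneg _ _ zero_le_one (by linarith), add_sub_cancel]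
    _ ≤ ∫⁻ x, (∫⁻ s, F (x, s) ∂ν) * g x ^ (p - 1) ∂μ := by gcongr with x; exact hgF x
    _ = ∫⁻ x, ∫⁻ s, F (x, s) * g x ^ (p - 1) ∂ν ∂μ := by
        refine lintegral_congr fun x => ?_
        exact (lintegral_mul_const _ (hF.comp measurable_prodMk_left)).symm
    _ = ∫⁻ s, ∫⁻ x, F (x, s) * g x ^ (p - 1) ∂μ ∂ν :=
        lintegral_lintegral_swap ((hF.mul ((hg.comp measurable_fst).pow_const _)).aemeasurable)
    _ ≤ ∫⁻ s, (∫⁻ x, F (x, s) ^ p ∂μ) ^ (1 / p) *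
          (∫⁻ x, g x ^ p ∂μ) ^ (1 / p.conjExponent) ∂ν :=
        lintegral_mono fun s => ENNReal.lintegral_mul_rpow_le_lintegral_rpow_mul_lintegral_rpow hpq
          (hF.comp measurable_prodMk_right).aemeasurable hg.aemeasurable
    _ = _ := lintegral_mul_const _ (((hF.pow_const p).lintegral_prod_left').pow_const _)

theorem lintegral_eq_iSup_lintegral_indicator_min [SigmaFinite μ] {f : X → ℝ≥0∞}
    (hf : Measurable f) :
    ∫⁻ x, f x ∂μ = ⨆ n : ℕ, ∫⁻ x, (spanningSets μ n).indicator (fun x => min (f x) n) x ∂μ := by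
  have hmono : Monotone fun (n : ℕ) x => (spanningSets μ n).indicator (fun x => min (f x) n) x :=
    fun m n hmn x => (indicator_le_indicator_of_subset (monotone_spanningSets μ hmn)
      (fun _ => zero_le) x).trans
        (indicator_le_indicator (min_le_min le_rfl (by exact_mod_cast hmn)))
  rw [← lintegral_iSup (fun n => (hf.min measurable_const).indicator
    (measurableSet_spanningSets μ n)) hmono]
  refine lintegral_congr fun x =>
    le_antisymm ?_ (iSup_le fun n => indicator_le (fun _ _ => min_le_left _ _) x)
  have hx := mem_spanningSetsIndex μ x
  calc f x = ⨆ k : ℕ, min (f x) k := by rw [← inf_iSup_eq, iSup_natCast, inf_top_eq]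
    _ ≤ _ := iSup_mono' fun k => ⟨max k (spanningSetsIndex μ x), by
        rw [indicator_of_mem (monotone_spanningSets μ (le_max_right _ _) hx)]
        exact min_le_min le_rfl (by exact_mod_cast le_max_left _ _)⟩

theorem lintegral_lintegral_rpow_le [SigmaFinite μ] [SFinite ν] {F : X × Y → ℝ≥0∞}
    (hF : Measurable F) {p : ℝ} (hp : 1 ≤ p) :
    (∫⁻ x, (∫⁻ s, F (x, s) ∂ν) ^ p ∂μ) ^ (1 / p) ≤
      ∫⁻ s, (∫⁻ x, F (x, s) ^ p ∂μ) ^ (1 / p) ∂ν := by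
  rcases hp.eq_or_lt with rfl | hp
  · simpa using (lintegral_lintegral_swap (f := fun x s => F (x, s)) hF.aemeasurable).le
  have hp0 : 0 < p := by linarith
  have hG : Measurable fun x => ∫⁻ s, F (x, s) ∂ν := hF.lintegral_prod_right'
  -- Truncating `(∫⁻ s, F (x, s) ∂ν) ^ p` makes its integral finite, as the previous lemma needs.
  rw [lintegral_eq_iSup_lintegral_indicator_min (hG.pow_const p), one_div,
    ENNReal.rpow_inv_le_iff hp0]
  refine iSup_le fun n => ?_
  set h := (spanningSets μ n).indicator fun x => min ((∫⁻ s, F (x, s) ∂ν) ^ p) (n : ℝ≥0∞)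
  have hh : Measurable h :=
    ((hG.pow_const p).min measurable_const).indicator (measurableSet_spanningSets μ n)
  have hfin : ∫⁻ x, h x ∂μ ≠ ∞ := by
    refine ne_top_of_le_ne_top (b := ∫⁻ x, (spanningSets μ n).indicator (fun _ => (n : ℝ≥0∞)) x ∂μ)
      ?_ (lintegral_mono fun x => indicator_le_indicator (min_le_right _ _))
    rw [lintegral_indicator_const (measurableSet_spanningSets μ n)]
    exact mul_ne_top (natCast_ne_top n) (measure_spanningSets_lt_top μ n).ne
  have key := lintegral_rpow_one_div_le_of_le_lintegral (μ := μ) hp hF (hh.pow_const p⁻¹)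
    (fun x => (ENNReal.rpow_inv_le_iff hp0).2 (indicator_le (fun _ _ => min_le_left _ _) x))
    (by simpa only [ENNReal.rpow_inv_rpow hp0.ne'] using hfin)
  simp only [ENNReal.rpow_inv_rpow hp0.ne'] at key
  rwa [one_div, ENNReal.rpow_inv_le_iff hp0] at key

end Minkowski

theorem setLIntegral_Ioo_ofReal_rpow {r y : ℝ} (hr : -1 < r) (hy : 0 ≤ y) :
    ∫⁻ s in Ioo 0 y, ENNReal.ofReal (s ^ r) = ENNReal.ofReal (y ^ (r + 1) / (r + 1)) := by
  have hint : IntegrableOn (fun s : ℝ => s ^ r) (Ioc 0 y) :=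
    (intervalIntegrable_iff_integrableOn_Ioc_of_le hy).1
      (intervalIntegral.intervalIntegrable_rpow' hr)
  rw [setLIntegral_congr Ioo_ae_eq_Ioc, ← ofReal_integral_eq_lintegral_ofReal hint
    (ae_restrict_of_forall_mem measurableSet_Ioc fun s hs => Real.rpow_nonneg hs.1.le r),
    ← intervalIntegral.integral_of_le hy, integral_rpow (Or.inl hr),
    Real.zero_rpow (by linarith), sub_zero]

theorem setLIntegral_Ioo_le_rpow_neg_mul {α y : ℝ} (hα : α ≤ 0) (w : ℝ → ℝ≥0∞) :
    ∫⁻ s in Ioo 0 y, w s ≤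
      ENNReal.ofReal (y ^ (-α)) * ∫⁻ s in Ioo 0 y, w s * ENNReal.ofReal (s ^ α) := by
  rw [← lintegral_const_mul' _ _ ofReal_ne_top]
  refine setLIntegral_mono' measurableSet_Ioo fun s hs => ?_
  calc w s = ENNReal.ofReal (s ^ (-α)) * (w s * ENNReal.ofReal (s ^ α)) := by
        rw [mul_left_comm, ← ENNReal.ofReal_mul (Real.rpow_nonneg hs.1.le _),
          ← Real.rpow_add hs.1, neg_add_cancel, Real.rpow_zero, ENNReal.ofReal_one, mul_one]
    _ ≤ _ := by gcongr <;> linarith [hs.1, hs.2]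

/-- The constant `C` in `∫₀^y w ≤ C y^{1-(1+α)/q} (∫₀^y w^q s^α ds)^{1/q}`; at `q = 1` it is
`0 ^ 0 = 1`. -/
noncomputable def weightedHolderConst (q α : ℝ) : ℝ := ((q - 1) / (q - 1 - α)) ^ ((q - 1) / q)

theorem weightedHolderConst_pos {q α : ℝ} (hq : 1 ≤ q) (hα : α < q - 1) :
    0 < weightedHolderConst q α := by
  rcases hq.eq_or_lt with rfl | hq
  · simp [weightedHolderConst]
  · exact Real.rpow_pos_of_pos (div_pos (by linarith) (by linarith)) _

theorem setLIntegral_Ioo_le_weightedHolderConst_of_one_lt {q α y : ℝ} (hq : 1 < q)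
    (hα : α < q - 1) (hy : 0 ≤ y) {w : ℝ → ℝ≥0∞} (hw : AEMeasurable w (volume.restrict (Ioo 0 y))) :
    ∫⁻ s in Ioo 0 y, w s ≤ ENNReal.ofReal (weightedHolderConst q α * y ^ (1 - (1 + α) / q)) *
      (∫⁻ s in Ioo 0 y, w s ^ q * ENNReal.ofReal (s ^ α)) ^ (1 / q) := by
  have hq0 : 0 < q := by linarith
  have hq1 : 0 < q - 1 := by linarith
  have hpq := Real.HolderConjugate.conjExponent hq
  have hr : -1 < -α / (q - 1) := by rw [lt_div_iff₀ (by linarith)]; linarith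
  calc ∫⁻ s in Ioo 0 y, w s
      = ∫⁻ s in Ioo 0 y, w s * ENNReal.ofReal (s ^ (α / q)) * ENNReal.ofReal (s ^ (-(α / q))) := by
        refine setLIntegral_congr_fun measurableSet_Ioo fun s hs => ?_
        rw [mul_assoc, ← ENNReal.ofReal_mul (Real.rpow_nonneg hs.1.le _), ← Real.rpow_add hs.1,
          add_neg_cancel, Real.rpow_zero, ENNReal.ofReal_one, mul_one]
    _ ≤ (∫⁻ s in Ioo 0 y, (w s * ENNReal.ofReal (s ^ (α / q))) ^ q) ^ (1 / q) *
        (∫⁻ s in Ioo 0 y, ENNReal.ofReal (s ^ (-(α / q))) ^ q.conjExponent) ^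
          (1 / q.conjExponent) :=
        ENNReal.lintegral_mul_le_Lp_mul_Lq _ hpq
          (hw.mul (measurable_id.pow_const _).ennreal_ofReal.aemeasurable)
          (measurable_id.pow_const _).ennreal_ofReal.aemeasurable
    _ = (∫⁻ s in Ioo 0 y, w s ^ q * ENNReal.ofReal (s ^ α)) ^ (1 / q) *
        ENNReal.ofReal (y ^ (-α / (q - 1) + 1) / (-α / (q - 1) + 1)) ^ ((q - 1) / q) := by
        rw [← setLIntegral_Ioo_ofReal_rpow hr hy]
        congr 2
        · refine setLIntegral_congr_fun measurableSet_Ioo fun s hs => ?_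
          rw [ENNReal.mul_rpow_of_nonneg _ _ hq0.le,
            ENNReal.ofReal_rpow_of_nonneg (Real.rpow_nonneg hs.1.le _) hq0.le,
            ← Real.rpow_mul hs.1.le, div_mul_cancel₀ _ hq0.ne']
        · refine setLIntegral_congr_fun measurableSet_Ioo fun s hs => ?_
          rw [ENNReal.ofReal_rpow_of_nonneg (Real.rpow_nonneg hs.1.le _) hpq.symm.nonneg,
            ← Real.rpow_mul hs.1.le, Real.conjExponent]
          congr 2
          field_simp
        · rw [Real.conjExponent, one_div_div]
    _ = _ := by
        rw [mul_comm, ENNReal.ofReal_rpow_of_nonneg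
          (div_nonneg (Real.rpow_nonneg hy _) (by linarith)) (div_nonneg hq1.le hq0.le)]
        congr 2
        have h1 : -α / (q - 1) + 1 = (q - 1 - α) / (q - 1) := by field_simp; ring
        have h1pos : 0 ≤ (q - 1 - α) / (q - 1) := div_nonneg (by linarith) hq1.le
        rw [h1, Real.div_rpow (by positivity) h1pos, ← Real.rpow_mul hy, div_eq_mul_inv,
          weightedHolderConst, ← Real.inv_rpow (by positivity), inv_div, mul_comm]
        congr 2
        field_simp
        ring

theorem setLIntegral_Ioo_le_weightedHolderConst {q α y : ℝ} (hq : 1 ≤ q) (hα : α < q - 1)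
    (hy : 0 ≤ y) {w : ℝ → ℝ≥0∞} (hw : AEMeasurable w (volume.restrict (Ioo 0 y))) :
    ∫⁻ s in Ioo 0 y, w s ≤ ENNReal.ofReal (weightedHolderConst q α * y ^ (1 - (1 + α) / q)) *
      (∫⁻ s in Ioo 0 y, w s ^ q * ENNReal.ofReal (s ^ α)) ^ (1 / q) := by
  rcases hq.eq_or_lt with rfl | hq
  · simpa [weightedHolderConst] using setLIntegral_Ioo_le_rpow_neg_mul (by linarith) w
  · exact setLIntegral_Ioo_le_weightedHolderConst_of_one_lt hq hα hy hw

theorem enorm_le_enorm_add_lintegral_deriv {E : Type*} [NormedAddCommGroup E] [NormedSpace ℝ E]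
    {f : ℝ → E} {a b : ℝ} (hf : ContDiffOn ℝ 1 f (Icc a b)) (hab : a ≤ b) :
    ‖f a‖ₑ ≤ ‖f b‖ₑ + ∫⁻ x in Ioo a b, ‖deriv f x‖ₑ := by
  rw [restrict_Ioo_eq_restrict_Icc]
  calc ‖f a‖ₑ = ‖f b - (f b - f a)‖ₑ := by rw [_root_.sub_sub_cancel]
    _ ≤ ‖f b‖ₑ + ‖f b - f a‖ₑ := enorm_sub_le
    _ ≤ _ := by gcongr; exact enorm_sub_le_lintegral_deriv_of_contDiffOn_Icc hf hab

theorem deriv_comp_prodMk_eq_fderiv_apply {𝕜 E F : Type*} [NontriviallyNormedField 𝕜]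
    [NormedAddCommGroup E] [NormedSpace 𝕜 E] [NormedAddCommGroup F] [NormedSpace 𝕜 F]
    {u : E × 𝕜 → F} {x : E} {s : 𝕜} (hu : DifferentiableAt 𝕜 u (x, s)) :
    deriv (fun t => u (x, t)) s = fderiv 𝕜 u (x, s) (0, 1) :=
  (hu.hasFDerivAt.comp_hasDerivAt s ((hasDerivAt_const s x).prodMk (hasDerivAt_id s))).deriv

theorem lintegral_rpow_le_add_weighted_of_le_add_setLIntegral {X : Type*} [MeasurableSpace X]
    {μ : Measure X} [SigmaFinite μ] {p q α y : ℝ} (hp : 1 ≤ p) (hq : 1 ≤ q) (hα : α < q - 1)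
    (hy : 0 ≤ y) {f₀ f₁ : X → ℝ≥0∞} (hf₁ : AEMeasurable f₁ μ) {F : X × ℝ → ℝ≥0∞}
    (hF : Measurable F) (h : ∀ x, f₀ x ≤ f₁ x + ∫⁻ s in Ioo 0 y, F (x, s)) :
    (∫⁻ x, f₀ x ^ p ∂μ) ^ (1 / p) ≤ (∫⁻ x, f₁ x ^ p ∂μ) ^ (1 / p) +
      ENNReal.ofReal (weightedHolderConst q α * y ^ (1 - (1 + α) / q)) *
        (∫⁻ s in Ioo 0 y, (∫⁻ x, F (x, s) ^ p ∂μ) ^ (q / p) * ENNReal.ofReal (s ^ α)) ^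
          (1 / q) := by
  calc (∫⁻ x, f₀ x ^ p ∂μ) ^ (1 / p)
      ≤ (∫⁻ x, (f₁ x + ∫⁻ s in Ioo 0 y, F (x, s)) ^ p ∂μ) ^ (1 / p) := by
        gcongr with x
        exact h x
    _ ≤ (∫⁻ x, f₁ x ^ p ∂μ) ^ (1 / p) + (∫⁻ x, (∫⁻ s in Ioo 0 y, F (x, s)) ^ p ∂μ) ^ (1 / p) :=
        ENNReal.lintegral_Lp_add_le hf₁ hF.lintegral_prod_right'.aemeasurable hp
    _ ≤ (∫⁻ x, f₁ x ^ p ∂μ) ^ (1 / p) + ∫⁻ s in Ioo 0 y, (∫⁻ x, F (x, s) ^ p ∂μ) ^ (1 / p) := by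
        gcongr
        exact lintegral_lintegral_rpow_le hF hp
    _ ≤ _ := by
        gcongr
        refine (setLIntegral_Ioo_le_weightedHolderConst hq hα hy
          ((hF.pow_const p).lintegral_prod_left'.pow_const _).aemeasurable).trans_eq ?_
        simp_rw [← ENNReal.rpow_mul, one_div_mul_eq_div]

/-- Pointwise-in-`y` trace estimate: for `u` continuously differentiable up to the boundary
on `ℝ^d × [0,1]` and `y ∈ (0,1)`, the `L_p` norm of `u(·,0)` is bounded by the `L_p` norm
of `u(·,y)` plus `N y^{1-(1+α)/q}` times the weighted mixed norm of the vertical derivative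
`D_y u` on `ℝ^d × (0,y)`.  The constant `N` depends only on `q` and `α`. -/
theorem trace_pointwise_estimate (q α : ℝ) (hq : 1 ≤ q) (hα : α < q - 1) :
    ∃ N : ℝ, 0 < N ∧ ∀ (d : ℕ) (p : ℝ), 1 ≤ p →
      ∀ u : EuclideanSpace ℝ (Fin d) × ℝ → ℝ,
        ContDiffOn ℝ 1 u (Set.univ ×ˢ Set.Icc 0 1) →
        ∀ y : ℝ, y ∈ Set.Ioo (0 : ℝ) 1 →
        (∫⁻ x, ENNReal.ofReal (|u (x, 0)| ^ p)) ^ (1 / p)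
          ≤ (∫⁻ x, ENNReal.ofReal (|u (x, y)| ^ p)) ^ (1 / p)
            + ENNReal.ofReal (N * y ^ (1 - (1 + α) / q)) *
              (∫⁻ s in Set.Ioo (0 : ℝ) y,
                (∫⁻ x, ENNReal.ofReal (|deriv (fun t => u (x, t)) s| ^ p)) ^ (q / p) *
                  ENNReal.ofReal (s ^ α)) ^ (1 / q) := by
  refine ⟨weightedHolderConst q α, weightedHolderConst_pos hq hα, fun d p hp u hu y hy => ?_⟩
  have hslice : ∀ x, ContDiffOn ℝ 1 (fun t => u (x, t)) (Icc 0 y) := fun x =>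
    hu.comp (contDiff_const.prodMk contDiff_id).contDiffOn
      fun t ht => ⟨trivial, Icc_subset_Icc_right hy.2.le ht⟩
  -- `fderiv ℝ u · (0, 1)` is a globally measurable version of `D_y u`.
  have hderiv : ∀ x, ∀ s ∈ Ioo 0 y, deriv (fun t => u (x, t)) s = fderiv ℝ u (x, s) (0, 1) :=
    fun x s hs => deriv_comp_prodMk_eq_fderiv_apply <|
      (hu.contDiffAt (prod_mem_nhds Filter.univ_mem
        (Icc_mem_nhds hs.1 (hs.2.trans hy.2)))).differentiableAt one_ne_zero
  have hFTC : ∀ x, ‖u (x, 0)‖ₑ ≤ ‖u (x, y)‖ₑ + ∫⁻ s in Ioo 0 y, ‖fderiv ℝ u (x, s) (0, 1)‖ₑ :=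
    fun x => (enorm_le_enorm_add_lintegral_deriv (hslice x) hy.1.le).trans_eq <| by
      rw [setLIntegral_congr_fun measurableSet_Ioo fun s hs => by rw [hderiv x s hs]]
  have hcont : Continuous fun x => u (x, y) :=
    hu.continuousOn.comp_continuous (continuous_id.prodMk continuous_const)
      fun _ => ⟨trivial, Ioo_subset_Icc_self hy⟩
  have henorm : ∀ a : ℝ, ENNReal.ofReal (|a| ^ p) = ‖a‖ₑ ^ p := fun a => by
    rw [Real.enorm_eq_ofReal_abs, ofReal_rpow_of_nonneg (abs_nonneg a) (by linarith)]
  simp only [henorm]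
  refine (lintegral_rpow_le_add_weighted_of_le_add_setLIntegral hp hq hα hy.1.le
    hcont.enorm.measurable.aemeasurable (measurable_fderiv_apply_const ℝ u (0, 1)).enorm
    hFTC).trans_eq ?_
  congr 3
  exact setLIntegral_congr_fun measurableSet_Ioo fun s hs => by simp only [hderiv _ s hs]
end

section
/- Let p, q ∈ [1, ∞) and α < q − 1. There exists N = N(q, α) > 0 such that for every function u : ℝ^d × [0,1] → ℝ continuously differentiable up to the boundary and every y ∈ (0,1), ‖u(·,y)‖_{L_p(ℝ^d)} ≤ N y^{−(1+α)/q} ( ‖u‖_{L_{p,q}(ℝ^d×(0,y), μ)} + y ‖D_y u‖_{L_{p,q}(ℝ^d×(0,y), μ)} ), where D_y u denotes the partial derivative of u in the last (vertical) variable. -/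
/-!
For `s ∈ (y/2, y)`, the fundamental theorem of calculus in the vertical variable together with
Minkowski's integral inequality gives
`‖u(·,y)‖_p ≤ ‖u(·,s)‖_p + ∫_{y/2}^y ‖D_y u(·,t)‖_p dt`.
Averaging the `q`-th power of this over `s ∈ (y/2, y)` and applying Hölder's inequality to the
last integral bounds `‖u(·,y)‖_p` by unweighted `L_q` averages over `(y/2, y)`. On that interval
the weight `s^α` is within a factor `2^|α|` of `y^α`, which turns the averages into the weighted
norms over `(0, y)`.
-/

open MeasureTheory ENNReal
open Set Filter Topology

section Minkowski

variable {X Y : Type*} [MeasurableSpace X] [MeasurableSpace Y] {μ : Measure X} {ν : Measure Y}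
  {f : X → Y → ℝ≥0∞}

theorem lintegral_lintegral_mul_le [SFinite μ] [SFinite ν]
    (hf : Measurable (Function.uncurry f)) {g : X → ℝ≥0∞} (hg : Measurable g)
    {p p' : ℝ} (hpp' : p.HolderConjugate p') :
    ∫⁻ x, (∫⁻ t, f x t ∂ν) * g x ∂μ ≤
      (∫⁻ t, (∫⁻ x, f x t ^ p ∂μ) ^ (1 / p) ∂ν) * (∫⁻ x, g x ^ p' ∂μ) ^ (1 / p') :=
  calc ∫⁻ x, (∫⁻ t, f x t ∂ν) * g x ∂μ = ∫⁻ x, ∫⁻ t, f x t * g x ∂ν ∂μ :=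
        lintegral_congr fun _ =>
          (lintegral_mul_const'' _ (hf.comp measurable_prodMk_left).aemeasurable).symm
    _ = ∫⁻ t, ∫⁻ x, f x t * g x ∂μ ∂ν :=
        lintegral_lintegral_swap (hf.mul (hg.comp measurable_fst)).aemeasurable
    _ ≤ ∫⁻ t, (∫⁻ x, f x t ^ p ∂μ) ^ (1 / p) * (∫⁻ x, g x ^ p' ∂μ) ^ (1 / p') ∂ν :=
        lintegral_mono fun _ => ENNReal.lintegral_mul_le_Lp_mul_Lq μ hpp'
          (hf.comp measurable_prodMk_right).aemeasurable hg.aemeasurable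
    _ = _ := lintegral_mul_const _ ((hf.pow_const p).lintegral_prod_left'.pow_const _)

theorem rpow_lintegral_rpow_le_of_le [SFinite μ] [SFinite ν]
    (hf : Measurable (Function.uncurry f)) {p : ℝ} (hp : 1 < p)
    {h : X → ℝ≥0∞} (hh : Measurable h) (hhf : ∀ x, h x ≤ ∫⁻ t, f x t ∂ν)
    (hfin : ∫⁻ x, h x ^ p ∂μ ≠ ∞) :
    (∫⁻ x, h x ^ p ∂μ) ^ (1 / p) ≤ ∫⁻ t, (∫⁻ x, f x t ^ p ∂μ) ^ (1 / p) ∂ν := by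
  set H := ∫⁻ x, h x ^ p ∂μ
  set R := ∫⁻ t, (∫⁻ x, f x t ^ p ∂μ) ^ (1 / p) ∂ν
  obtain hH | hH := eq_or_ne H 0
  · rw [hH, ENNReal.zero_rpow_of_pos (one_div_pos.2 (by linarith))]
    exact zero_le
  obtain ⟨p', hpp'⟩ : ∃ p', p.HolderConjugate p' := ⟨_, .conjExponent hp⟩
  -- test the inequality against `h ^ (p - 1)`, whose `p'`-th power is `h ^ p`
  have key : H ≤ R * H ^ (1 / p') :=
    calc H = ∫⁻ x, h x * h x ^ (p - 1) ∂μ := lintegral_congr fun x => by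
          conv_lhs => rw [show p = 1 + (p - 1) by ring,
            ENNReal.rpow_add_of_nonneg _ _ zero_le_one (by linarith), ENNReal.rpow_one]
      _ ≤ ∫⁻ x, (∫⁻ t, f x t ∂ν) * h x ^ (p - 1) ∂μ := by gcongr with x; exact hhf x
      _ ≤ R * (∫⁻ x, (h x ^ (p - 1)) ^ p' ∂μ) ^ (1 / p') :=
          lintegral_lintegral_mul_le hf (hh.pow_const _) hpp'
      _ = R * H ^ (1 / p') := by simp_rw [← ENNReal.rpow_mul, hpp'.sub_one_mul_conj]; rfl
  have hsplit : H = H ^ (1 / p) * H ^ (1 / p') := by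
    rw [← ENNReal.rpow_add_of_nonneg _ _ hpp'.one_div_nonneg hpp'.symm.one_div_nonneg,
      one_div, one_div, hpp'.inv_add_inv_eq_one, ENNReal.rpow_one]
  conv_lhs at key => rw [hsplit]
  refine (ENNReal.mul_le_mul_iff_left ?_ ?_).1 key
  · exact (ENNReal.rpow_pos (pos_iff_ne_zero.2 hH) hfin).ne'
  · exact ENNReal.rpow_ne_top_of_nonneg hpp'.symm.one_div_nonneg hfin

theorem lintegral_rpow_le_of_forall_le_of_ne_top [SigmaFinite μ] {V : X → ℝ≥0∞}
    (hV : Measurable V) {p : ℝ} (hp : 0 < p) {C : ℝ≥0∞}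
    (hC : ∀ k : X → ℝ≥0∞, Measurable k → (∀ x, k x ≤ V x) → ∫⁻ x, k x ^ p ∂μ ≠ ∞ →
      ∫⁻ x, k x ^ p ∂μ ≤ C) :
    ∫⁻ x, V x ^ p ∂μ ≤ C := by
  set k : ℕ → X → ℝ≥0∞ := fun n => (spanningSets μ n).indicator fun x => min (V x) n
  have hk_meas n : Measurable (k n) :=
    (hV.min measurable_const).indicator (measurableSet_spanningSets μ n)
  have hk_le n x : k n x ≤ V x := indicator_apply_le fun _ => min_le_left _ _
  have hk_mono x : Monotone fun n => k n x ^ p := fun m n hmn => by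
    dsimp only
    gcongr
    calc k m x ≤ (spanningSets μ m).indicator (fun x => min (V x) n) x :=
          indicator_le_indicator (by gcongr)
      _ ≤ k n x := indicator_le_indicator_apply_of_subset (monotone_spanningSets μ hmn) zero_le
  have hk_tendsto x : Tendsto (fun n => k n x ^ p) atTop (𝓝 (V x ^ p)) := by
    refine Tendsto.ennrpow_const p ?_
    have hmin := (tendsto_const_nhds (x := V x)).min ENNReal.tendsto_nat_nhds_top
    rw [min_top_right] at hmin
    refine hmin.congr' ?_
    filter_upwards [eventually_ge_atTop (spanningSetsIndex μ x)] with n hn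
    exact (indicator_of_mem (mem_spanningSets_of_index_le μ x hn) fun x => min (V x) n).symm
  have hk_fin n : ∫⁻ x, k n x ^ p ∂μ ≠ ∞ := by
    refine ne_top_of_le_ne_top (b := (n : ℝ≥0∞) ^ p * μ (spanningSets μ n)) ?_ ?_
    · exact mul_ne_top (rpow_ne_top_of_nonneg hp.le (natCast_ne_top n))
        (measure_spanningSets_lt_top μ n).ne
    · rw [← lintegral_indicator_const (measurableSet_spanningSets μ n)]
      refine lintegral_mono fun x => ?_
      by_cases hx : x ∈ spanningSets μ n
      · simp only [k, indicator_of_mem hx]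
        gcongr
        exact min_le_right _ _
      · simp [k, indicator_of_notMem hx, zero_rpow_of_pos hp]
  exact le_of_tendsto' (lintegral_tendsto_of_tendsto_of_monotone
    (fun n => (hk_meas n).pow_const p |>.aemeasurable) (ae_of_all _ hk_mono)
    (ae_of_all _ hk_tendsto)) fun n => hC (k n) (hk_meas n) (hk_le n) (hk_fin n)

theorem eLpNorm'_lintegral_le [SigmaFinite μ] [SFinite ν]
    (hf : Measurable (Function.uncurry f)) {p : ℝ} (hp : 1 ≤ p) :
    eLpNorm' (fun x => ∫⁻ t, f x t ∂ν) p μ ≤ ∫⁻ t, eLpNorm' (f · t) p μ ∂ν := by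
  simp only [eLpNorm'_eq_lintegral_enorm, enorm_eq_self]
  obtain rfl | hp := hp.eq_or_lt
  · simpa using (lintegral_lintegral_swap hf.aemeasurable).le
  rw [one_div, rpow_inv_le_iff (by linarith)]
  refine lintegral_rpow_le_of_forall_le_of_ne_top hf.lintegral_prod_right' (by linarith)
    fun k hk hkf hfin => ?_
  rw [← rpow_inv_le_iff (by linarith), ← one_div]
  exact rpow_lintegral_rpow_le_of_le hf hp hk hkf hfin

end Minkowski

theorem enorm_sub_le_setLIntegral_enorm_deriv {E : Type*} [NormedAddCommGroup E]
    [NormedSpace ℝ E] [CompleteSpace E] {g g' : ℝ → E} {a b : ℝ} (hab : a ≤ b)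
    (hderiv : ∀ t ∈ Icc a b, HasDerivAt g (g' t) t) (hint : IntervalIntegrable g' volume a b) :
    ‖g b - g a‖ₑ ≤ ∫⁻ t in Ioo a b, ‖g' t‖ₑ := by
  rw [← intervalIntegral.integral_eq_sub_of_hasDerivAt (by rwa [uIcc_of_le hab]) hint,
    intervalIntegral.integral_of_le hab, Measure.restrict_congr_set Ioo_ae_eq_Ioc.symm]
  exact enorm_integral_le_lintegral_enorm _

theorem eLpNorm'_le_add_setLIntegral_eLpNorm'_deriv {X : Type*} [MeasurableSpace X]
    {μ : Measure X} [SigmaFinite μ] {u D : X × ℝ → ℝ} (hD : Measurable D) {s y : ℝ}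
    (hsy : s ≤ y) (hu : AEStronglyMeasurable (fun x => u (x, s)) μ)
    (hderiv : ∀ x, ∀ t ∈ Icc s y, HasDerivAt (fun t => u (x, t)) (D (x, t)) t)
    (hint : ∀ x, IntervalIntegrable (fun t => D (x, t)) volume s y) {p : ℝ} (hp : 1 ≤ p) :
    eLpNorm' (fun x => u (x, y)) p μ ≤
      eLpNorm' (fun x => u (x, s)) p μ + ∫⁻ t in Ioo s y, eLpNorm' (fun x => D (x, t)) p μ := by
  set V := fun x => ∫⁻ t in Ioo s y, ‖D (x, t)‖ₑ
  have hptwise x : ‖u (x, y)‖ₑ ≤ ‖u (x, s)‖ₑ + V x :=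
    calc ‖u (x, y)‖ₑ ≤ ‖u (x, s)‖ₑ + ‖u (x, y) - u (x, s)‖ₑ := by
          simpa using enorm_add_le (u (x, s)) (u (x, y) - u (x, s))
      _ ≤ ‖u (x, s)‖ₑ + V x := by
          gcongr; exact enorm_sub_le_setLIntegral_enorm_deriv hsy (hderiv x) (hint x)
  calc eLpNorm' (fun x => u (x, y)) p μ ≤ eLpNorm' ((fun x => ‖u (x, s)‖ₑ) + V) p μ :=
        eLpNorm'_mono_enorm_ae (by linarith) (ae_of_all _ hptwise)
    _ ≤ eLpNorm' (fun x => ‖u (x, s)‖ₑ) p μ + eLpNorm' V p μ :=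
        eLpNorm'_add_le hu.enorm.aestronglyMeasurable
          hD.enorm.lintegral_prod_right'.aestronglyMeasurable hp
    _ ≤ eLpNorm' (fun x => u (x, s)) p μ + ∫⁻ t in Ioo s y, eLpNorm' (fun x => D (x, t)) p μ := by
        rw [eLpNorm'_enorm]
        gcongr
        exact (eLpNorm'_lintegral_le (f := fun x t => ‖D (x, t)‖ₑ) hD.enorm hp).trans_eq
          (lintegral_congr fun _ => eLpNorm'_enorm)

section Averaging

variable {Z : Type*} [MeasurableSpace Z] {ν : Measure Z} {q : ℝ}

theorem mul_rpow_measure_univ_le_of_ae_le_add (hq : 0 < q) {a K : ℝ≥0∞} {Φ : Z → ℝ≥0∞}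
    (h : ∀ᵐ s ∂ν, a ≤ Φ s + K) :
    a * ν univ ^ (1 / q) ≤ (∫⁻ s, Φ s ^ q ∂ν) ^ (1 / q) + K * ν univ ^ (1 / q) := by
  have hsub : (a - K) * ν univ ^ (1 / q) ≤ (∫⁻ s, Φ s ^ q ∂ν) ^ (1 / q) :=
    calc (a - K) * ν univ ^ (1 / q) = (∫⁻ _, (a - K) ^ q ∂ν) ^ (1 / q) := by
          rw [lintegral_const, mul_rpow_of_nonneg _ _ (by positivity), ← rpow_mul,
            mul_one_div_cancel hq.ne', rpow_one]
      _ ≤ (∫⁻ s, Φ s ^ q ∂ν) ^ (1 / q) := by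
          gcongr ?_ ^ _
          exact lintegral_mono_ae (h.mono fun s hs => by gcongr; exact tsub_le_iff_right.2 hs)
  calc a * ν univ ^ (1 / q) ≤ (a - K + K) * ν univ ^ (1 / q) := by gcongr; exact le_tsub_add
    _ = (a - K) * ν univ ^ (1 / q) + K * ν univ ^ (1 / q) := add_mul _ _ _
    _ ≤ _ := by gcongr

theorem lintegral_mul_rpow_measure_univ_le (hq : 1 ≤ q) {Ψ : Z → ℝ≥0∞} (hΨ : AEMeasurable Ψ ν) :
    (∫⁻ t, Ψ t ∂ν) * ν univ ^ (1 / q) ≤ ν univ * (∫⁻ t, Ψ t ^ q ∂ν) ^ (1 / q) := by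
  have hHolder := eLpNorm'_le_eLpNorm'_mul_rpow_measure_univ one_pos hq hΨ.aestronglyMeasurable
  simp only [eLpNorm'_eq_lintegral_enorm, enorm_eq_self, rpow_one, div_one] at hHolder
  calc (∫⁻ t, Ψ t ∂ν) * ν univ ^ (1 / q)
      ≤ (∫⁻ t, Ψ t ^ q ∂ν) ^ (1 / q) * ν univ ^ (1 - 1 / q) * ν univ ^ (1 / q) := by gcongr
    _ = ν univ * (∫⁻ t, Ψ t ^ q ∂ν) ^ (1 / q) := by
      rw [mul_assoc, ← rpow_add_of_nonneg _ _ (by simp [inv_le_one_of_one_le₀ hq])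
        (by positivity), sub_add_cancel, rpow_one, mul_comm]

theorem mul_rpow_measure_univ_le_of_ae_le_add_lintegral (hq : 1 ≤ q) {a : ℝ≥0∞}
    {Φ Ψ : Z → ℝ≥0∞} (hΨ : AEMeasurable Ψ ν) (h : ∀ᵐ s ∂ν, a ≤ Φ s + ∫⁻ t, Ψ t ∂ν) :
    a * ν univ ^ (1 / q) ≤ (∫⁻ s, Φ s ^ q ∂ν) ^ (1 / q) + ν univ * (∫⁻ t, Ψ t ^ q ∂ν) ^ (1 / q) :=
  (mul_rpow_measure_univ_le_of_ae_le_add (zero_lt_one.trans_le hq) h).trans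
    (add_le_add le_rfl (lintegral_mul_rpow_measure_univ_le hq hΨ))

end Averaging

theorem one_le_two_rpow_abs_mul_div_rpow {s y : ℝ} (α : ℝ) (hs : y / 2 < s) (hsy : s ≤ y) :
    1 ≤ 2 ^ |α| * (s / y) ^ α := by
  have hy : 0 < y := by linarith
  have hs0 : 0 < s := by linarith
  calc (1 : ℝ) = 2 ^ |α| * (1 / 2) ^ |α| := by
        rw [← Real.mul_rpow (by norm_num) (by norm_num)]; norm_num
    _ ≤ 2 ^ |α| * (s / y) ^ |α| := by
        gcongr 2 ^ |α| * ?_ ^ _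
        rw [le_div_iff₀ hy]; linarith
    _ ≤ 2 ^ |α| * (s / y) ^ α := by
        gcongr 2 ^ |α| * ?_
        exact Real.rpow_le_rpow_of_exponent_ge (by positivity) ((div_le_one hy).2 hsy)
          (le_abs_self α)

theorem setLIntegral_Ioo_half_le_weighted {y : ℝ} (hy : 0 < y) (α : ℝ) (h : ℝ → ℝ≥0∞) :
    ∫⁻ s in Ioo (y / 2) y, h s ≤
      ENNReal.ofReal (y / 2) * ENNReal.ofReal (2 ^ (1 + |α|) * y ^ (-(1 + α))) *
        ∫⁻ s in Ioo 0 y, h s * ENNReal.ofReal (s ^ α) := by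
  set c := ENNReal.ofReal (y / 2) * ENNReal.ofReal (2 ^ (1 + |α|) * y ^ (-(1 + α)))
  calc ∫⁻ s in Ioo (y / 2) y, h s
      ≤ ∫⁻ s in Ioo (y / 2) y, c * (h s * ENNReal.ofReal (s ^ α)) := by
        refine setLIntegral_mono' measurableSet_Ioo fun s ⟨hs, hsy⟩ => ?_
        have hweight : 1 ≤ c * ENNReal.ofReal (s ^ α) := by
          have hs0 : 0 < s := by linarith
          simp only [c]
          rw [← ENNReal.ofReal_mul (by positivity), ← ENNReal.ofReal_mul (by positivity),
            ← ENNReal.ofReal_one]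
          refine ENNReal.ofReal_le_ofReal
            ((one_le_two_rpow_abs_mul_div_rpow α hs hsy.le).trans_eq ?_)
          rw [Real.div_rpow hs0.le hy.le, Real.rpow_add two_pos, Real.rpow_one, neg_add,
            Real.rpow_add hy, Real.rpow_neg_one, Real.rpow_neg hy.le]
          field_simp
        calc h s ≤ c * ENNReal.ofReal (s ^ α) * h s := le_mul_of_one_le_left zero_le hweight
          _ = c * (h s * ENNReal.ofReal (s ^ α)) := by ring
    _ ≤ c * ∫⁻ s in Ioo 0 y, h s * ENNReal.ofReal (s ^ α) := by
        rw [lintegral_const_mul' _ _ (mul_ne_top ofReal_ne_top ofReal_ne_top)]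
        gcongr
        exact (half_pos hy).le

theorem le_weighted_of_forall_le_add_setLIntegral {q α y : ℝ} (hq : 1 ≤ q) (hy : 0 < y)
    {a : ℝ≥0∞} {Φ Ψ : ℝ → ℝ≥0∞} (hΨ : AEMeasurable Ψ (volume.restrict (Ioo (y / 2) y)))
    (h : ∀ s ∈ Ioo (y / 2) y, a ≤ Φ s + ∫⁻ t in Ioo (y / 2) y, Ψ t) :
    a ≤ ENNReal.ofReal (2 ^ ((1 + |α|) / q) * y ^ (-(1 + α) / q)) *
      ((∫⁻ s in Ioo 0 y, Φ s ^ q * ENNReal.ofReal (s ^ α)) ^ (1 / q) +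
        ENNReal.ofReal y * (∫⁻ s in Ioo 0 y, Ψ s ^ q * ENNReal.ofReal (s ^ α)) ^ (1 / q)) := by
  have hq0 : 0 < q := zero_lt_one.trans_le hq
  set L := ENNReal.ofReal (y / 2)
  set κ := ENNReal.ofReal (2 ^ (1 + |α|) * y ^ (-(1 + α)))
  have hL : volume (Ioo (y / 2) y) = L := by rw [Real.volume_Ioo]; congr 1; ring
  have hweighted (g : ℝ → ℝ≥0∞) : (∫⁻ s in Ioo (y / 2) y, g s ^ q) ^ (1 / q) ≤
      (L * κ) ^ (1 / q) * (∫⁻ s in Ioo 0 y, g s ^ q * ENNReal.ofReal (s ^ α)) ^ (1 / q) := by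
    rw [← mul_rpow_of_nonneg _ _ (by positivity)]
    gcongr
    exact setLIntegral_Ioo_half_le_weighted hy α _
  have hκ : κ ^ (1 / q) = ENNReal.ofReal (2 ^ ((1 + |α|) / q) * y ^ (-(1 + α) / q)) := by
    rw [ofReal_rpow_of_nonneg (by positivity) (by positivity),
      Real.mul_rpow (by positivity) (by positivity), ← Real.rpow_mul zero_le_two,
      ← Real.rpow_mul hy.le, mul_one_div, mul_one_div]
  have havg := mul_rpow_measure_univ_le_of_ae_le_add_lintegral hq hΨ
    (ae_restrict_of_forall_mem measurableSet_Ioo h)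
  rw [Measure.restrict_apply_univ, hL] at havg
  rw [← hκ]
  refine (ENNReal.mul_le_mul_iff_left (c := L ^ (1 / q)) ?_ ?_).1 ?_
  · exact (ENNReal.rpow_pos (ENNReal.ofReal_pos.2 (half_pos hy)) ofReal_ne_top).ne'
  · exact rpow_ne_top_of_nonneg (by positivity) ofReal_ne_top
  calc a * L ^ (1 / q)
      ≤ (∫⁻ s in Ioo (y / 2) y, Φ s ^ q) ^ (1 / q) +
          L * (∫⁻ s in Ioo (y / 2) y, Ψ s ^ q) ^ (1 / q) := havg
    _ ≤ (L * κ) ^ (1 / q) * (∫⁻ s in Ioo 0 y, Φ s ^ q * ENNReal.ofReal (s ^ α)) ^ (1 / q) +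
          ENNReal.ofReal y * ((L * κ) ^ (1 / q) *
            (∫⁻ s in Ioo 0 y, Ψ s ^ q * ENNReal.ofReal (s ^ α)) ^ (1 / q)) := by
        gcongr
        · exact hweighted Φ
        · exact ENNReal.ofReal_le_ofReal (by linarith)
        · exact hweighted Ψ
    _ = _ := by rw [mul_rpow_of_nonneg _ _ (by positivity)]; ring

section VerticalDerivative

variable {E : Type*} [NormedAddCommGroup E] [NormedSpace ℝ E] {u : E × ℝ → ℝ}

theorem ContDiffOn.hasDerivAt_vertical (hu : ContDiffOn ℝ 1 u (univ ×ˢ Icc 0 1)) (x : E)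
    {t : ℝ} (ht : t ∈ Ioo 0 1) :
    HasDerivAt (fun t => u (x, t)) (fderiv ℝ u (x, t) (0, 1)) t := by
  have hdiff : DifferentiableAt ℝ u (x, t) :=
    (hu.contDiffAt (prod_mem_nhds univ_mem (Icc_mem_nhds ht.1 ht.2))).differentiableAt
      one_ne_zero
  exact hdiff.hasFDerivAt.comp_hasDerivAt t ((hasDerivAt_const t x).prodMk (hasDerivAt_id t))

theorem ContDiffOn.continuousOn_fderiv_vertical (hu : ContDiffOn ℝ 1 u (univ ×ˢ Icc 0 1)) :
    ContinuousOn (fun z => fderiv ℝ u z (0, 1)) (univ ×ˢ Ioo 0 1) :=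
  ((hu.mono (prod_mono subset_rfl Ioo_subset_Icc_self)).continuousOn_fderiv_of_isOpen
    (isOpen_univ.prod isOpen_Ioo) le_rfl).clm_apply continuousOn_const

variable [MeasurableSpace E] [OpensMeasurableSpace E] {μ : Measure E}

theorem ContDiffOn.aemeasurable_eLpNorm'_deriv_slice [SFinite μ]
    (hu : ContDiffOn ℝ 1 u (univ ×ˢ Icc 0 1)) {a b : ℝ} (ha : 0 ≤ a) (hb : b ≤ 1) (p : ℝ) :
    AEMeasurable (fun t => eLpNorm' (fun x => deriv (fun t => u (x, t)) t) p μ)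
      (volume.restrict (Ioo a b)) := by
  have hD := measurable_fderiv_apply_const ℝ u ((0 : E), (1 : ℝ))
  have hmeas : Measurable fun t => eLpNorm' (fun x => fderiv ℝ u (x, t) (0, 1)) p μ := by
    simp only [eLpNorm'_eq_lintegral_enorm]
    exact (hD.enorm.pow_const p).lintegral_prod_left'.pow_const _
  refine hmeas.aemeasurable.congr (ae_restrict_of_forall_mem measurableSet_Ioo fun t ht => ?_)
  simp only [(hu.hasDerivAt_vertical _ (Ioo_subset_Ioo ha hb ht)).deriv]

theorem ContDiffOn.eLpNorm'_slice_le [SigmaFinite μ] (hu : ContDiffOn ℝ 1 u (univ ×ˢ Icc 0 1))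
    {s y : ℝ} (hs : 0 < s) (hsy : s ≤ y) (hy : y < 1) {p : ℝ} (hp : 1 ≤ p) :
    eLpNorm' (fun x => u (x, y)) p μ ≤ eLpNorm' (fun x => u (x, s)) p μ +
      ∫⁻ t in Ioo s y, eLpNorm' (fun x => deriv (fun t => u (x, t)) t) p μ := by
  have hsy01 : Icc s y ⊆ Ioo 0 1 := Icc_subset_Ioo hs hy
  refine (eLpNorm'_le_add_setLIntegral_eLpNorm'_deriv
    (measurable_fderiv_apply_const ℝ u ((0 : E), (1 : ℝ))) hsy ?_
    (fun x t ht => hu.hasDerivAt_vertical x (hsy01 ht)) (fun x => ?_) hp).trans_eq ?_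
  · exact (hu.continuousOn.comp_continuous (continuous_id.prodMk continuous_const)
      fun x => ⟨mem_univ x, hs.le, hsy.trans hy.le⟩).aestronglyMeasurable
  · exact (hu.continuousOn_fderiv_vertical.comp
      (continuous_const.prodMk continuous_id).continuousOn
      fun t ht => ⟨mem_univ x, hsy01 ht⟩).intervalIntegrable_of_Icc hsy
  · refine congr_arg _ (setLIntegral_congr_fun measurableSet_Ioo fun t ht => ?_)
    simp only [(hu.hasDerivAt_vertical _ (hsy01 (Ioo_subset_Icc_self ht))).deriv]

end VerticalDerivative

theorem lintegral_ofReal_abs_rpow_eq_eLpNorm' {X : Type*} [MeasurableSpace X] {μ : Measure X}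
    (f : X → ℝ) {p : ℝ} (hp : 0 < p) :
    ∫⁻ x, ENNReal.ofReal (|f x| ^ p) ∂μ = eLpNorm' f p μ ^ p := by
  rw [eLpNorm'_eq_lintegral_enorm, ← rpow_mul, one_div_mul_cancel hp.ne', rpow_one]
  congr with x
  rw [Real.enorm_eq_ofReal_abs, ofReal_rpow_of_nonneg (abs_nonneg _) hp.le]

theorem interior_Lp_estimate_general (q α : ℝ) (hq : 1 ≤ q) :
    ∃ N : ℝ, 0 < N ∧ ∀ (d : ℕ) (p : ℝ), 1 ≤ p →
      ∀ u : EuclideanSpace ℝ (Fin d) × ℝ → ℝ,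
        ContDiffOn ℝ 1 u (Set.univ ×ˢ Set.Icc 0 1) →
        ∀ y : ℝ, y ∈ Set.Ioo (0 : ℝ) 1 →
        (∫⁻ x, ENNReal.ofReal (|u (x, y)| ^ p)) ^ (1 / p)
          ≤ ENNReal.ofReal (N * y ^ (-(1 + α) / q)) *
            ((∫⁻ s in Set.Ioo (0 : ℝ) y,
                (∫⁻ x, ENNReal.ofReal (|u (x, s)| ^ p)) ^ (q / p) *
                  ENNReal.ofReal (s ^ α)) ^ (1 / q)
             + ENNReal.ofReal y *
               (∫⁻ s in Set.Ioo (0 : ℝ) y,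
                 (∫⁻ x, ENNReal.ofReal (|deriv (fun t => u (x, t)) s| ^ p)) ^ (q / p) *
                   ENNReal.ofReal (s ^ α)) ^ (1 / q)) := by
  refine ⟨2 ^ ((1 + |α|) / q), by positivity, fun d p hp u hu y ⟨hy0, hy1⟩ => ?_⟩
  have hp0 : 0 < p := zero_lt_one.trans_le hp
  simp only [lintegral_ofReal_abs_rpow_eq_eLpNorm' _ hp0, ← rpow_mul, mul_one_div_cancel hp0.ne',
    rpow_one, mul_div_cancel₀ _ hp0.ne']
  refine le_weighted_of_forall_le_add_setLIntegral hq hy0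
    (hu.aemeasurable_eLpNorm'_deriv_slice (half_pos hy0).le hy1.le p) fun s ⟨hs, hsy⟩ => ?_
  exact (hu.eLpNorm'_slice_le (by linarith) hsy.le hy1 hp).trans
    (add_le_add le_rfl (lintegral_mono_set (Ioo_subset_Ioo_left hs.le)))

/-- Interior estimate: for `u` continuously differentiable up to the boundary on
`ℝ^d × [0,1]` and `y ∈ (0,1)`, the `L_p` norm of `u(·,y)` is bounded by
`N y^{-(1+α)/q}` times the weighted mixed norm of `u` plus `y` times that of the vertical
derivative `D_y u`, both on `ℝ^d × (0,y)`.  The constant `N` depends only on `q`, `α`. -/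
theorem interior_Lp_estimate (q α : ℝ) (hq : 1 ≤ q) (hα : α < q - 1) :
    ∃ N : ℝ, 0 < N ∧ ∀ (d : ℕ) (p : ℝ), 1 ≤ p →
      ∀ u : EuclideanSpace ℝ (Fin d) × ℝ → ℝ,
        ContDiffOn ℝ 1 u (Set.univ ×ˢ Set.Icc 0 1) →
        ∀ y : ℝ, y ∈ Set.Ioo (0 : ℝ) 1 →
        (∫⁻ x, ENNReal.ofReal (|u (x, y)| ^ p)) ^ (1 / p)
          ≤ ENNReal.ofReal (N * y ^ (-(1 + α) / q)) *
            ((∫⁻ s in Set.Ioo (0 : ℝ) y,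
                (∫⁻ x, ENNReal.ofReal (|u (x, s)| ^ p)) ^ (q / p) *
                  ENNReal.ofReal (s ^ α)) ^ (1 / q)
             + ENNReal.ofReal y *
               (∫⁻ s in Set.Ioo (0 : ℝ) y,
                 (∫⁻ x, ENNReal.ofReal (|deriv (fun t => u (x, t)) s| ^ p)) ^ (q / p) *
                   ENNReal.ofReal (s ^ α)) ^ (1 / q)) :=
  interior_Lp_estimate_general q α hq
end

section
/- Let p, q ∈ [1, ∞) and α ∈ (−q, −1]. If u : ℝ^d × [0,1) → ℝ is continuously differentiable on ℝ^d × (0,1) and both ‖u‖_{L_{p,q}(ℝ^d×(0,1), μ)} and ‖Du‖_{L_{p,q}(ℝ^d×(0,1), μ)} are finite, then lim_{y → 0^+} ‖u(·,y)‖_{L_p(ℝ^d)} = 0. -/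
/-!
Write `F y = ‖u(·, y)‖_{L_p}` and `G s = ‖Du(·, s)‖_{L_p}`. The fundamental theorem of calculus
in the vertical variable and Minkowski's integral inequality give
`F y ≤ F z + ∫_y^z G` for `0 < y ≤ z < 1`. Since `q ≥ 1` and `s ^ α ≥ 1` on `(0, 1)`, the
weighted `L_q` bound on `G` makes `G` integrable on `(0, 1)`, so `∫_0^z G → 0` as `z → 0`.
Since `α ≤ -1`, the weight `s ^ α` is not integrable at `0`, so the weighted `L_q` bound on `F`
forces `F` to be small at points arbitrarily close to `0`. Choosing such a point `z` with
`∫_0^z G` small bounds `F` on all of `(0, z)`.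
-/

open MeasureTheory ENNReal Set Filter Topology

theorem ENNReal.iSup_rpow {ι : Sort*} (a : ι → ℝ≥0∞) {r : ℝ} (hr : 0 < r) :
    (⨆ i, a i) ^ r = ⨆ i, a i ^ r :=
  (orderIsoRpow r hr).map_iSup a

section Minkowski

variable {α β : Type*} [MeasurableSpace α] [MeasurableSpace β] {μ : Measure α} {ν : Measure β}
  {p : ℝ} {f : α → β → ℝ≥0∞}

theorem lintegral_Lp_le_of_le_lintegral [SFinite μ] [SFinite ν] (hp : 1 < p)
    (hf : Measurable (Function.uncurry f)) {J : α → ℝ≥0∞} (hJ : Measurable J)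
    (hJf : ∀ x, J x ≤ ∫⁻ s, f x s ∂ν) (hJp : ∫⁻ x, J x ^ p ∂μ ≠ ∞) :
    (∫⁻ x, J x ^ p ∂μ) ^ (1 / p) ≤ ∫⁻ s, (∫⁻ x, f x s ^ p ∂μ) ^ (1 / p) ∂ν := by
  have hpq : p.HolderConjugate p.conjExponent := .conjExponent hp
  set q := p.conjExponent
  set T := ∫⁻ x, J x ^ p ∂μ
  set R := ∫⁻ s, (∫⁻ x, f x s ^ p ∂μ) ^ (1 / p) ∂ν
  have hT : T ≤ R * T ^ (1 / q) := calc
    T = ∫⁻ x, J x * J x ^ (p - 1) ∂μ := lintegral_congr fun x => by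
        conv_lhs => rw [← add_sub_cancel 1 p]
        rw [rpow_add_of_nonneg _ _ zero_le_one (by linarith), rpow_one]
    _ ≤ ∫⁻ x, (∫⁻ s, f x s ∂ν) * J x ^ (p - 1) ∂μ := by gcongr with x; exact hJf x
    _ = ∫⁻ x, ∫⁻ s, f x s * J x ^ (p - 1) ∂ν ∂μ := lintegral_congr fun x =>
        (lintegral_mul_const _ (hf.comp measurable_prodMk_left)).symm
    _ = ∫⁻ s, ∫⁻ x, f x s * J x ^ (p - 1) ∂μ ∂ν :=
        lintegral_lintegral_swap (hf.mul ((hJ.comp measurable_fst).pow_const _)).aemeasurable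
    _ ≤ ∫⁻ s, (∫⁻ x, f x s ^ p ∂μ) ^ (1 / p) * T ^ (1 / q) ∂ν := by
        gcongr with s
        exact lintegral_mul_rpow_le_lintegral_rpow_mul_lintegral_rpow hpq
          (hf.comp measurable_prodMk_right).aemeasurable hJ.aemeasurable
    _ = R * T ^ (1 / q) :=
        lintegral_mul_const _ ((hf.pow_const p).lintegral_prod_left'.pow_const _)
  rcases eq_or_ne T 0 with hT0 | hT0
  · rw [hT0, zero_rpow_of_pos (by have := hpq.pos; positivity)]
    exact zero_le
  have hq0 : 0 < 1 / q := by have := hpq.symm.pos; positivity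
  refine (ENNReal.mul_le_mul_iff_left (rpow_pos (pos_iff_ne_zero.2 hT0) hJp).ne'
    (rpow_ne_top_of_nonneg hq0.le hJp)).mp ?_
  rwa [← rpow_add _ _ hT0 hJp, hpq.one_div_add_one_div, div_one, rpow_one]

theorem lintegral_Lp_lintegral_le [SigmaFinite μ] [SFinite ν] (hp : 1 ≤ p)
    (hf : Measurable (Function.uncurry f)) :
    (∫⁻ x, (∫⁻ s, f x s ∂ν) ^ p ∂μ) ^ (1 / p) ≤ ∫⁻ s, (∫⁻ x, f x s ^ p ∂μ) ^ (1 / p) ∂ν := by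
  rcases hp.eq_or_lt with rfl | hp
  · simpa using (lintegral_lintegral_swap hf.aemeasurable).le
  have hp0 : 0 < p := zero_lt_one.trans hp
  set I := fun x => ∫⁻ s, f x s ∂ν
  obtain ⟨w, hw0, hw, hw_int⟩ := exists_pos_lintegral_lt_of_sigmaFinite μ one_ne_zero
  -- Truncating `I` by multiples of `w ^ (1 / p)`, with `w > 0` and `∫ w < ∞`, makes every
  -- `∫ J n ^ p` finite while still `J n ↑ I`.
  set J : ℕ → α → ℝ≥0∞ := fun n x => min (I x) (n * (w x : ℝ≥0∞) ^ (1 / p))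
  have hJ_meas : ∀ n, Measurable (J n) := fun n =>
    hf.lintegral_prod_right'.min
      (measurable_const.mul ((measurable_coe_nnreal_ennreal.comp hw).pow_const _))
  have hJ_mono : Monotone J := fun m n hmn x => by
    dsimp only [J]; gcongr
  have hJ_sup : ∀ x, ⨆ n, J n x = I x := fun x => by
    have hw_ne : (w x : ℝ≥0∞) ^ (1 / p) ≠ 0 := by
      have := hw0 x
      positivity
    simp only [J]
    rw [← inf_iSup_eq, ← iSup_mul, iSup_natCast, top_mul hw_ne, inf_top_eq]
  have hJ_fin : ∀ n, ∫⁻ x, J n x ^ p ∂μ ≠ ∞ := fun n => by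
    refine ne_top_of_le_ne_top (b := (n : ℝ≥0∞) ^ p * ∫⁻ x, w x ∂μ)
      (mul_ne_top (by simp [hp0.le]) (hw_int.trans one_lt_top).ne) ?_
    rw [← lintegral_const_mul' _ _ (by simp [hp0.le])]
    refine lintegral_mono fun x => (rpow_le_rpow (min_le_right _ _) hp0.le).trans_eq ?_
    rw [mul_rpow_of_nonneg _ _ hp0.le, ← rpow_mul, one_div_mul_cancel hp0.ne', rpow_one]
  calc (∫⁻ x, I x ^ p ∂μ) ^ (1 / p) = ⨆ n, (∫⁻ x, J n x ^ p ∂μ) ^ (1 / p) := by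
        simp_rw [← hJ_sup, ENNReal.iSup_rpow _ hp0]
        rw [lintegral_iSup (fun n => (hJ_meas n).pow_const p)
          (fun m n hmn x => rpow_le_rpow (hJ_mono hmn x) hp0.le),
          ENNReal.iSup_rpow _ (by positivity)]
    _ ≤ _ := iSup_le fun n => lintegral_Lp_le_of_le_lintegral hp hf (hJ_meas n)
        (fun x => min_le_left _ _) (hJ_fin n)

end Minkowski

theorem enorm_le_enorm_add_lintegral_fderiv {E F : Type*} [NormedAddCommGroup E]
    [NormedSpace ℝ E] [NormedAddCommGroup F] [NormedSpace ℝ F] {u : E × ℝ → F} {U : Set (E × ℝ)}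
    (hU : IsOpen U) (hu : ContDiffOn ℝ 1 u U) {x : E} {y z : ℝ} (hyz : y ≤ z)
    (hxU : ∀ s ∈ Icc y z, (x, s) ∈ U) :
    ‖u (x, y)‖ₑ ≤ ‖u (x, z)‖ₑ + ∫⁻ s in Icc y z, ‖fderiv ℝ u (x, s)‖ₑ := by
  have hv : ContDiffOn ℝ 1 (fun t => u (x, t)) (Icc y z) :=
    hu.comp (contDiff_const.prodMk contDiff_id).contDiffOn hxU
  have hderiv : ∀ s ∈ Icc y z, ‖deriv (fun t => u (x, t)) s‖ₑ ≤ ‖fderiv ℝ u (x, s)‖ₑ := by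
    intro s hs
    have hu_diff := (hu.differentiableOn one_ne_zero (x, s) (hxU s hs)).differentiableAt
      (hU.mem_nhds (hxU s hs))
    have hv_deriv : HasDerivAt (fun t => u (x, t)) (fderiv ℝ u (x, s) (0, 1)) s :=
      hu_diff.hasFDerivAt.comp_hasDerivAt s ((hasDerivAt_const s x).prodMk (hasDerivAt_id s))
    rw [hv_deriv.deriv]
    refine ((fderiv ℝ u (x, s)).le_opENorm _).trans_eq ?_
    simp [enorm, Prod.nnnorm_def]
  calc ‖u (x, y)‖ₑ
      ≤ ‖u (x, z)‖ₑ + ‖u (x, z) - u (x, y)‖ₑ := by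
        simpa using enorm_sub_le (a := u (x, z)) (b := u (x, z) - u (x, y))
    _ ≤ ‖u (x, z)‖ₑ + ∫⁻ s in Icc y z, ‖deriv (fun t => u (x, t)) s‖ₑ := by
      gcongr; exact enorm_sub_le_lintegral_deriv_of_contDiffOn_Icc hv hyz
    _ ≤ _ := by gcongr 1; exact setLIntegral_mono' measurableSet_Icc hderiv

theorem lintegral_Lp_slice_le_add {E F : Type*} [NormedAddCommGroup E] [NormedSpace ℝ E]
    [MeasurableSpace E] [BorelSpace E] [SecondCountableTopology E]
    [NormedAddCommGroup F] [NormedSpace ℝ F] [CompleteSpace F] {μ : Measure E} [SigmaFinite μ]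
    {p : ℝ} (hp : 1 ≤ p) {u : E × ℝ → F} {U : Set (E × ℝ)} (hU : IsOpen U)
    (hu : ContDiffOn ℝ 1 u U) {y z : ℝ} (hyz : y ≤ z) (hyzU : ∀ x, ∀ s ∈ Icc y z, (x, s) ∈ U) :
    (∫⁻ x, ‖u (x, y)‖ₑ ^ p ∂μ) ^ (1 / p) ≤ (∫⁻ x, ‖u (x, z)‖ₑ ^ p ∂μ) ^ (1 / p) +
      ∫⁻ s in Icc y z, (∫⁻ x, ‖fderiv ℝ u (x, s)‖ₑ ^ p ∂μ) ^ (1 / p) := by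
  have hp0 : 0 < p := zero_lt_one.trans_le hp
  have hDu : Measurable fun w : E × ℝ => ‖fderiv ℝ u w‖ₑ := (measurable_fderiv ℝ u).enorm
  have hu_z : Measurable fun x => ‖u (x, z)‖ₑ :=
    (hu.continuousOn.comp_continuous (continuous_id.prodMk continuous_const)
      fun x => hyzU x z ⟨hyz, le_rfl⟩).enorm.measurable
  calc (∫⁻ x, ‖u (x, y)‖ₑ ^ p ∂μ) ^ (1 / p)
      ≤ (∫⁻ x, (‖u (x, z)‖ₑ + ∫⁻ s in Icc y z, ‖fderiv ℝ u (x, s)‖ₑ) ^ p ∂μ) ^ (1 / p) := by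
        gcongr with x
        exact enorm_le_enorm_add_lintegral_fderiv hU hu hyz (hyzU x)
    _ ≤ (∫⁻ x, ‖u (x, z)‖ₑ ^ p ∂μ) ^ (1 / p) +
          (∫⁻ x, (∫⁻ s in Icc y z, ‖fderiv ℝ u (x, s)‖ₑ) ^ p ∂μ) ^ (1 / p) :=
        lintegral_Lp_add_le hu_z.aemeasurable hDu.lintegral_prod_right'.aemeasurable hp
    _ ≤ _ := by
        gcongr
        exact lintegral_Lp_lintegral_le hp hDu

theorem lintegral_Ioo_rpow_eq_top {α δ : ℝ} (hα : α ≤ -1) (hδ : 0 < δ) :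
    ∫⁻ s in Ioo 0 δ, ENNReal.ofReal (s ^ α) = ∞ := by
  by_contra h
  have hint := (lintegral_ofReal_ne_top_iff_integrable
    (measurable_id.pow_const α).aestronglyMeasurable
    ((ae_restrict_mem measurableSet_Ioo).mono fun s hs => Real.rpow_nonneg hs.1.le α)).1 h
  linarith [(intervalIntegral.integrableOn_Ioo_rpow_iff hδ).1 hint]

theorem frequently_lt_of_lintegral_mul_rpow_ne_top {g : ℝ → ℝ≥0∞} {α b : ℝ} (hα : α ≤ -1)
    (hb : 0 < b) (hg : ∫⁻ s in Ioo 0 b, g s * ENNReal.ofReal (s ^ α) ≠ ∞) {ε : ℝ≥0∞}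
    (hε : ε ≠ 0) : ∃ᶠ s in 𝓝[>] 0, g s < ε := by
  intro hge
  obtain ⟨δ, hδ, hδg⟩ := (nhdsGT_basis 0).eventually_iff.1 hge
  refine hg (eq_top_iff.2 ?_)
  calc ∞ = ε * ∫⁻ s in Ioo 0 (min δ b), ENNReal.ofReal (s ^ α) := by
        rw [lintegral_Ioo_rpow_eq_top hα (lt_min hδ hb), mul_top hε]
    _ = ∫⁻ s in Ioo 0 (min δ b), ε * ENNReal.ofReal (s ^ α) :=
        (lintegral_const_mul _ (measurable_id.pow_const α).ennreal_ofReal).symm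
    _ ≤ ∫⁻ s in Ioo 0 (min δ b), g s * ENNReal.ofReal (s ^ α) := by
        refine setLIntegral_mono' measurableSet_Ioo fun s hs => ?_
        gcongr
        exact not_lt.1 (hδg ⟨hs.1, hs.2.trans_le (min_le_left _ _)⟩)
    _ ≤ _ := lintegral_mono_set (Ioo_subset_Ioo_right (min_le_right _ _))

theorem lintegral_ne_top_of_lintegral_rpow_mul_rpow_ne_top {g : ℝ → ℝ≥0∞} {q α b : ℝ}
    (hq : 1 ≤ q) (hα : α ≤ 0) (hb : b ≤ 1)
    (hg : ∫⁻ s in Ioo 0 b, g s ^ q * ENNReal.ofReal (s ^ α) ≠ ∞) :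
    ∫⁻ s in Ioo 0 b, g s ≠ ∞ := by
  have hle : ∀ s ∈ Ioo 0 b, g s ≤ 1 + g s ^ q * ENNReal.ofReal (s ^ α) := fun s hs => by
    have hweight : 1 ≤ ENNReal.ofReal (s ^ α) := by
      rw [← ofReal_one]
      exact ofReal_le_ofReal
        (Real.one_le_rpow_of_pos_of_le_one_of_nonpos hs.1 (hs.2.le.trans hb) hα)
    rcases le_total (g s) 1 with h1 | h1
    · exact h1.trans le_self_add
    · calc g s = g s ^ (1 : ℝ) := (rpow_one _).symm
        _ ≤ g s ^ q * ENNReal.ofReal (s ^ α) :=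
            (rpow_le_rpow_of_exponent_le h1 hq).trans (le_mul_of_one_le_right' hweight)
        _ ≤ _ := le_add_self
  refine ne_top_of_le_ne_top ?_ (setLIntegral_mono' measurableSet_Ioo hle)
  rw [lintegral_add_left measurable_const, setLIntegral_const, one_mul, Real.volume_Ioo]
  exact add_ne_top.2 ⟨ofReal_ne_top, hg⟩

theorem tendsto_nhdsGT_zero_of_le_add_lintegral {F G : ℝ → ℝ≥0∞} {b : ℝ} (hb : 0 < b)
    (hG : ∫⁻ s in Ioo 0 b, G s ≠ ∞) (hF : ∀ ε ≠ 0, ∃ᶠ z in 𝓝[>] 0, F z < ε)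
    (hFG : ∀ y z, 0 < y → y ≤ z → z < b → F y ≤ F z + ∫⁻ s in Icc y z, G s) :
    Tendsto F (𝓝[>] 0) (𝓝 0) := by
  set H : ℝ → ℝ≥0∞ := fun z => ∫⁻ s in Ioc 0 z, G s ∂volume.restrict (Ioo 0 b)
  have hH : Tendsto H (𝓝[>] 0) (𝓝 0) := by
    have hlen : Tendsto (fun z : ℝ => ENNReal.ofReal z) (𝓝[>] 0) (𝓝 0) := by
      simpa using (ENNReal.tendsto_ofReal (tendsto_id (x := 𝓝 (0 : ℝ)))).mono_left
        nhdsWithin_le_nhds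
    refine tendsto_setLIntegral_zero hG (tendsto_of_tendsto_of_tendsto_of_le_of_le
      tendsto_const_nhds hlen (fun _ => zero_le) fun z => ?_)
    exact (Measure.restrict_apply_le _ _).trans_eq (by simp)
  rw [ENNReal.tendsto_nhds_zero]
  intro ε hε
  have hε2 : ε / 2 ≠ 0 := (ENNReal.half_pos hε.ne').ne'
  obtain ⟨z, hFz, hHz, hz⟩ := ((hF _ hε2).and_eventually ((hH.eventually (gt_mem_nhds
    (pos_iff_ne_zero.2 hε2))).and (Ioo_mem_nhdsGT hb))).exists
  filter_upwards [Ioo_mem_nhdsGT hz.1] with y hy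
  calc F y ≤ F z + ∫⁻ s in Icc y z, G s := hFG y z hy.1 hy.2.le hz.2
    _ ≤ ε / 2 + ε / 2 := by
        gcongr
        refine le_trans ?_ hHz.le
        simp only [H]
        rw [Measure.restrict_restrict measurableSet_Ioc]
        exact lintegral_mono_set fun s hs => ⟨⟨hy.1.trans_le hs.1, hs.2⟩,
          hy.1.trans_le hs.1, hs.2.trans_lt hz.2⟩
    _ = ε := ENNReal.add_halves ε

theorem vanishing_trace_general (d : ℕ) (p q α : ℝ) (hp : 1 ≤ p) (hq : 1 ≤ q)
    (hα2 : α ≤ -1)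
    (u : EuclideanSpace ℝ (Fin d) × ℝ → ℝ)
    (hu : ContDiffOn ℝ 1 u (Set.univ ×ˢ Set.Ioo 0 1))
    (hfin : (∫⁻ y in Set.Ioo (0 : ℝ) 1,
        (∫⁻ x, ENNReal.ofReal (|u (x, y)| ^ p)) ^ (q / p) * ENNReal.ofReal (y ^ α)) ≠ ⊤)
    (hDfin : (∫⁻ y in Set.Ioo (0 : ℝ) 1,
        (∫⁻ x, ENNReal.ofReal (‖fderiv ℝ u (x, y)‖ ^ p)) ^ (q / p) *
          ENNReal.ofReal (y ^ α)) ≠ ⊤) :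
    Filter.Tendsto (fun y : ℝ => (∫⁻ x, ENNReal.ofReal (|u (x, y)| ^ p)) ^ (1 / p))
      (nhdsWithin 0 (Set.Ioi 0)) (nhds 0) := by
  have hp0 : 0 < p := zero_lt_one.trans_le hp
  have hq0 : 0 < q := zero_lt_one.trans_le hq
  have hpow : ∀ a : ℝ≥0∞, a ^ (q / p) = (a ^ (1 / p)) ^ q := fun a => by
    rw [← rpow_mul, one_div_mul_eq_div]
  have henorm : ∀ {E : Type} [SeminormedAddCommGroup E] (v : E),
      ENNReal.ofReal (‖v‖ ^ p) = ‖v‖ₑ ^ p := fun v => by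
    rw [← ofReal_rpow_of_nonneg (norm_nonneg v) hp0.le, ofReal_norm]
  simp_rw [hpow, ← Real.norm_eq_abs, henorm] at hfin hDfin ⊢
  have hG_int := lintegral_ne_top_of_lintegral_rpow_mul_rpow_ne_top hq (by linarith) le_rfl hDfin
  have hF_small : ∀ ε ≠ 0, ∃ᶠ y in 𝓝[>] 0, (∫⁻ x, ‖u (x, y)‖ₑ ^ p) ^ (1 / p) < ε := fun ε hε =>
    (frequently_lt_of_lintegral_mul_rpow_ne_top hα2 one_pos hfin
      (rpow_pos_of_nonneg (pos_iff_ne_zero.2 hε) hq0.le).ne').mono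
      fun y hy => (rpow_lt_rpow_iff hq0).1 hy
  exact tendsto_nhdsGT_zero_of_le_add_lintegral one_pos hG_int hF_small
    fun y z hy hyz hz => lintegral_Lp_slice_le_add hp (isOpen_univ.prod isOpen_Ioo) hu hyz
      fun x s hs => ⟨trivial, hy.trans_le hs.1, hs.2.trans_lt hz⟩

/-- Vanishing trace when `α ∈ (-q, -1]`: if `u` is continuously differentiable on
`ℝ^d × (0,1)` and both `u` and its full gradient have finite weighted mixed
`L_{p,q}(ℝ^d × (0,1), y^α dx dy)` norm, then `‖u(·,y)‖_{L_p(ℝ^d)} → 0` as `y → 0⁺`. -/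
theorem vanishing_trace (d : ℕ) (p q α : ℝ) (hp : 1 ≤ p) (hq : 1 ≤ q)
    (hα1 : -q < α) (hα2 : α ≤ -1)
    (u : EuclideanSpace ℝ (Fin d) × ℝ → ℝ)
    (hu : ContDiffOn ℝ 1 u (Set.univ ×ˢ Set.Ioo 0 1))
    (hfin : (∫⁻ y in Set.Ioo (0 : ℝ) 1,
        (∫⁻ x, ENNReal.ofReal (|u (x, y)| ^ p)) ^ (q / p) * ENNReal.ofReal (y ^ α)) ≠ ⊤)
    (hDfin : (∫⁻ y in Set.Ioo (0 : ℝ) 1,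
        (∫⁻ x, ENNReal.ofReal (‖fderiv ℝ u (x, y)‖ ^ p)) ^ (q / p) *
          ENNReal.ofReal (y ^ α)) ≠ ⊤) :
    Filter.Tendsto (fun y : ℝ => (∫⁻ x, ENNReal.ofReal (|u (x, y)| ^ p)) ^ (1 / p))
      (nhdsWithin 0 (Set.Ioi 0)) (nhds 0) :=
  vanishing_trace_general d p q α hp hq hα2 u hu hfin hDfin
end

section
/- Let p ∈ [1, ∞) and f ∈ L_p(ℝ^d). There exists N = N(d) > 0 such that for every h ∈ ℝ^d with h ≠ 0, ‖Δ_h f‖_{L_p(ℝ^d)} ≤ N |h|^{−d} ∫_{B_{|h|}} ‖Δ_η f‖_{L_p(ℝ^d)} dη, where B_{|h|} is the ball of radius |h| centered at the origin. -/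
/-!
Writing `Δ_h f = Δ_η f + (Δ_{h-η} f)(· + η)` and using translation invariance of the `L_p` norm
gives `‖Δ_h f‖_p ≤ ‖Δ_η f‖_p + ‖Δ_{h-η} f‖_p` for every `η`. Average this over `η` in the ball
`B(h/2, |h|/2)`: it is invariant under the reflection `η ↦ h - η`, so both terms contribute the
same integral, and it lies inside `B(0, |h|)` and has volume comparable to `|h|^d`.
-/

open MeasureTheory ENNReal Metric Module

section Translation

variable {G : Type*} [AddCommGroup G] [MeasurableSpace G] {μ : Measure G}

lemma mul_measure_le_two_mul_setLIntegral_of_le_add [MeasurableAdd G] [MeasurableNeg G]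
    [μ.IsAddLeftInvariant] [μ.IsNegInvariant] {g : G → ℝ≥0∞} (hg : Measurable g) {h : G}
    (hle : ∀ η, g h ≤ g η + g (h - η)) {s : Set G} (hs : MeasurableSet s)
    (hsymm : (h - ·) ⁻¹' s = s) :
    g h * μ s ≤ 2 * ∫⁻ η in s, g η ∂μ := by
  have hreflect : ∫⁻ η in s, g (h - η) ∂μ = ∫⁻ η in s, g η ∂μ := by
    simpa only [hsymm] using
      (Measure.measurePreserving_sub_left μ h).setLIntegral_comp_preimage hs hg
  calc g h * μ s = ∫⁻ _ in s, g h ∂μ := (setLIntegral_const _ _).symm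
    _ ≤ ∫⁻ η in s, (g η + g (h - η)) ∂μ := lintegral_mono hle
    _ = 2 * ∫⁻ η in s, g η ∂μ := by rw [lintegral_add_left hg, hreflect, two_mul]

variable {F : Type*} [NormedAddCommGroup F] [μ.IsAddRightInvariant] {f : G → F}

lemma eLpNorm_sub_translate_le_add [MeasurableAdd G] {p : ℝ≥0∞} (hp : 1 ≤ p)
    (hf : AEStronglyMeasurable f μ) (h η : G) :
    eLpNorm (fun x => f (x + h) - f x) p μ ≤
      eLpNorm (fun x => f (x + η) - f x) p μ + eLpNorm (fun x => f (x + (h - η)) - f x) p μ := by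
  have hτ := measurePreserving_add_right μ η
  have hΔ (ξ : G) : AEStronglyMeasurable (fun x => f (x + ξ) - f x) μ :=
    (hf.comp_measurePreserving (measurePreserving_add_right μ ξ)).sub hf
  have hsplit : (fun x => f (x + h) - f x) =
      (fun x => f (x + η) - f x) + (fun x => f (x + (h - η)) - f x) ∘ (· + η) := by
    funext x
    simp [add_add_sub_cancel]
  calc _ = eLpNorm ((fun x => f (x + η) - f x) +
          (fun x => f (x + (h - η)) - f x) ∘ (· + η)) p μ := by rw [hsplit]
    _ ≤ _ := eLpNorm_add_le (hΔ η) ((hΔ _).comp_measurePreserving hτ) hp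
    _ = _ := by rw [eLpNorm_comp_measurePreserving (hΔ _) hτ]

lemma eLpNorm_sub_translate_congr_ae [MeasurableAdd G] {f' : G → F} (hff' : f =ᵐ[μ] f')
    (p : ℝ≥0∞) (η : G) :
    eLpNorm (fun x => f (x + η) - f x) p μ = eLpNorm (fun x => f' (x + η) - f' x) p μ :=
  eLpNorm_congr_ae <|
    ((measurePreserving_add_right μ η).quasiMeasurePreserving.ae_eq_comp hff').sub hff'

lemma measurable_eLpNorm_sub_translate [MeasurableAdd₂ G] [SFinite μ] {p : ℝ≥0∞} (hp0 : p ≠ 0)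
    (hptop : p ≠ ⊤) (hf : AEStronglyMeasurable f μ) :
    Measurable fun η => eLpNorm (fun x => f (x + η) - f x) p μ := by
  obtain ⟨f', hf'm, hff'⟩ := hf
  simp_rw [eLpNorm_sub_translate_congr_ae hff', eLpNorm_eq_lintegral_rpow_enorm_toReal hp0 hptop]
  refine Measurable.pow_const ?_ _
  refine Measurable.lintegral_prod_right' (ν := μ)
    (f := fun z : G × G => ‖f' (z.2 + z.1) - f' z.2‖ₑ ^ p.toReal) ?_
  exact (((hf'm.comp_measurable (measurable_snd.add measurable_fst)).sub
    (hf'm.comp_measurable measurable_snd)).enorm).pow_const _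

end Translation

lemma preimage_add_self_sub_ball {E : Type*} [SeminormedAddCommGroup E] (c : E) (r : ℝ) :
    (c + c - ·) ⁻¹' ball c r = ball c r := by
  ext x
  simp [dist_eq_norm, add_sub_right_comm, ← norm_neg (x - c)]

lemma measureReal_ball_pos {X : Type*} [PseudoMetricSpace X] [ProperSpace X] [MeasurableSpace X]
    (μ : Measure X) [μ.IsOpenPosMeasure] [IsFiniteMeasureOnCompacts μ] (x : X) {r : ℝ}
    (hr : 0 < r) : 0 < μ.real (ball x r) :=
  ENNReal.toReal_pos (measure_ball_pos μ x hr).ne' measure_ball_lt_top.ne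

section FiniteDimensional

variable {E : Type*} [NormedAddCommGroup E] [NormedSpace ℝ E] [MeasurableSpace E] [BorelSpace E]
  [FiniteDimensional ℝ E] (μ : Measure E) [μ.IsAddHaarMeasure]

lemma eLpNorm_sub_translate_mul_addHaar_ball_le {F : Type*} [NormedAddCommGroup F] {f : E → F}
    (hf : AEStronglyMeasurable f μ) {p : ℝ≥0∞} (hp : 1 ≤ p) (hptop : p ≠ ⊤) (h : E) :
    eLpNorm (fun x => f (x + h) - f x) p μ * μ (ball 0 (‖h‖ / 2)) ≤
      2 * ∫⁻ η in ball 0 ‖h‖, eLpNorm (fun x => f (x + η) - f x) p μ ∂μ := by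
  set c : E := (2 : ℝ)⁻¹ • h
  have hcc : c + c = h := by rw [← two_smul ℝ c, smul_inv_smul₀ two_ne_zero]
  have hc : ‖c‖ = ‖h‖ / 2 := by rw [norm_smul, norm_inv, Real.norm_two, inv_mul_eq_div]
  have hsub : ball c (‖h‖ / 2) ⊆ ball 0 ‖h‖ :=
    ball_subset_ball' (by rw [dist_zero_right, hc, add_halves])
  rw [← Measure.addHaar_ball_center μ c]
  calc _ ≤ 2 * ∫⁻ η in ball c (‖h‖ / 2), eLpNorm (fun x => f (x + η) - f x) p μ ∂μ :=
        mul_measure_le_two_mul_setLIntegral_of_le_add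
          (measurable_eLpNorm_sub_translate (zero_lt_one.trans_le hp).ne' hptop hf)
          (eLpNorm_sub_translate_le_add hp hf h) measurableSet_ball
          (hcc ▸ preimage_add_self_sub_ball c _)
    _ ≤ _ := mul_le_mul_right (lintegral_mono_set hsub) 2

lemma two_mul_inv_addHaar_ball_half (x : E) {r : ℝ} (hr : 0 < r) :
    2 * (μ (ball x (r / 2)))⁻¹ =
      ENNReal.ofReal (2 ^ (finrank ℝ E + 1) / μ.real (ball 0 1)) *
        ENNReal.ofReal (r ^ (-(finrank ℝ E : ℝ))) := by
  have hω := measureReal_ball_pos μ 0 one_pos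
  rw [Measure.addHaar_ball_of_pos μ x (half_pos hr), ← ofReal_measureReal measure_ball_lt_top.ne,
    ← ENNReal.ofReal_mul (by positivity), ← ENNReal.ofReal_inv_of_pos (by positivity),
    ← ENNReal.ofReal_ofNat 2, ← ENNReal.ofReal_mul zero_le_two,
    ← ENNReal.ofReal_mul (by positivity), Real.rpow_neg hr.le, Real.rpow_natCast]
  congr 1
  rw [div_pow]
  field_simp
  ring

end FiniteDimensional

/-- Averaging estimate for differences: there is `N = N(d) > 0` such that for every
`f ∈ L_p(ℝ^d)` and every `h ≠ 0`,
`‖Δ_h f‖_{L_p} ≤ N |h|^{-d} ∫_{B_{|h|}} ‖Δ_η f‖_{L_p} dη`. -/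
theorem difference_average_estimate (d : ℕ) :
    ∃ N : ℝ, 0 < N ∧ ∀ (p : ℝ), 1 ≤ p →
      ∀ f : EuclideanSpace ℝ (Fin d) → ℝ, MemLp f (ENNReal.ofReal p) →
      ∀ h : EuclideanSpace ℝ (Fin d), h ≠ 0 →
        eLpNorm (fun x => f (x + h) - f x) (ENNReal.ofReal p) volume
          ≤ ENNReal.ofReal N * ENNReal.ofReal (‖h‖ ^ (-(d : ℝ))) *
            ∫⁻ η in Metric.ball (0 : EuclideanSpace ℝ (Fin d)) ‖h‖,
              eLpNorm (fun x => f (x + η) - f x) (ENNReal.ofReal p) volume := by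
  refine ⟨2 ^ (d + 1) / volume.real (ball (0 : EuclideanSpace ℝ (Fin d)) 1),
    div_pos (by positivity) (measureReal_ball_pos _ 0 one_pos), fun p hp f hf h hh => ?_⟩
  have hp' : 1 ≤ ENNReal.ofReal p := by simpa using ENNReal.ofReal_le_ofReal hp
  set B := ball (0 : EuclideanSpace ℝ (Fin d)) (‖h‖ / 2)
  have hB : volume B ≠ 0 := (measure_ball_pos _ _ (half_pos (norm_pos_iff.2 hh))).ne'
  calc _ = (volume B)⁻¹ *
        (eLpNorm (fun x => f (x + h) - f x) (ENNReal.ofReal p) volume * volume B) := by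
        rw [mul_comm _ (volume B), ENNReal.inv_mul_cancel_left hB measure_ball_lt_top.ne]
    _ ≤ (volume B)⁻¹ * (2 * ∫⁻ η in ball 0 ‖h‖,
          eLpNorm (fun x => f (x + η) - f x) (ENNReal.ofReal p) volume) :=
        mul_le_mul_right (eLpNorm_sub_translate_mul_addHaar_ball_le volume
          hf.aestronglyMeasurable hp' ofReal_ne_top h) _
    _ = _ := by
        rw [← mul_assoc, mul_comm _ 2, two_mul_inv_addHaar_ball_half _ _ (norm_pos_iff.2 hh),
          finrank_euclideanSpace_fin]
end

section
/- Let p ∈ [1, ∞) and f ∈ L_p(ℝ^d). There exists N = N(d) > 0 such that for every t > 0, ω(t, f)_p ≤ N ∫_{{|η| ≤ t}} |η|^{−d} ‖Δ_η f‖_{L_p(ℝ^d)} dη. -/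
/-!
The function `g η = ‖Δ_η f‖_p` is subadditive, so `g h ≤ g η + g (h - η)` for every `η`.
Averaging over `η` in the ball `S` with diameter `[0, h]`, which is invariant under
`η ↦ h - η`, gives `|S| g h ≤ 2 ∫_S g`. On `S` we have `|η| ≤ |h|`, so
`∫_S g ≤ |h|^d ∫_{|η| ≤ |h|} |η|^{-d} g η`, and `|S| = 2^{-d} |h|^d |B_1|` cancels the factor
`|h|^d`.
-/

open MeasureTheory ENNReal Metric Module
open scoped fwdDiff

section Translation

variable {G F : Type*} [AddCommGroup G] [MeasurableSpace G] [MeasurableAdd G] {μ : Measure G}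
  [μ.IsAddRightInvariant] [NormedAddCommGroup F] {f : G → F}

theorem MeasureTheory.AEStronglyMeasurable.fwdDiff (hf : AEStronglyMeasurable f μ) (h : G) :
    AEStronglyMeasurable (Δ_[h] f) μ :=
  (hf.comp_measurePreserving (measurePreserving_add_right μ h)).sub hf

theorem eLpNorm_fwdDiff_add_le {p : ℝ≥0∞} (hp : 1 ≤ p) (hf : AEStronglyMeasurable f μ) (a b : G) :
    eLpNorm (Δ_[a + b] f) p μ ≤ eLpNorm (Δ_[a] f) p μ + eLpNorm (Δ_[b] f) p μ := by
  have hsplit : Δ_[a + b] f = Δ_[b] f ∘ (· + a) + Δ_[a] f := by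
    ext x
    simp only [fwdDiff, Function.comp_apply, Pi.add_apply, add_assoc, sub_add_sub_cancel]
  have hshift := measurePreserving_add_right μ a
  calc eLpNorm (Δ_[a + b] f) p μ
      ≤ eLpNorm (Δ_[b] f ∘ (· + a)) p μ + eLpNorm (Δ_[a] f) p μ := by
        rw [hsplit]
        exact eLpNorm_add_le ((hf.fwdDiff b).comp_measurePreserving hshift) (hf.fwdDiff a) hp
    _ = eLpNorm (Δ_[a] f) p μ + eLpNorm (Δ_[b] f) p μ := by
        rw [eLpNorm_comp_measurePreserving (hf.fwdDiff b) hshift, add_comm]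

theorem measurable_eLpNorm_fwdDiff [MeasurableAdd₂ G] [SFinite μ] {p : ℝ≥0∞} (hp0 : p ≠ 0)
    (hp : p ≠ ∞) (hf : AEStronglyMeasurable f μ) :
    Measurable fun h => eLpNorm (Δ_[h] f) p μ := by
  have hmk : ∀ h, eLpNorm (Δ_[h] f) p μ = eLpNorm (Δ_[h] (hf.mk f)) p μ := fun h =>
    eLpNorm_congr_ae <|
      ((measurePreserving_add_right μ h).quasiMeasurePreserving.ae_eq_comp hf.ae_eq_mk).sub
        hf.ae_eq_mk
  simp only [hmk, eLpNorm_eq_lintegral_rpow_enorm_toReal hp0 hp]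
  have hmeas := hf.stronglyMeasurable_mk
  refine (Measurable.lintegral_prod_right' (f := fun z : G × G =>
    ‖hf.mk f (z.2 + z.1) - hf.mk f z.2‖ₑ ^ p.toReal) ?_).pow_const _
  exact (((hmeas.comp_measurable (measurable_snd.add measurable_fst)).sub
    (hmeas.comp_measurable measurable_snd)).enorm).pow_const _

end Translation

section Averaging

variable {G : Type*} [AddGroup G] [MeasurableSpace G] [MeasurableAdd G] [MeasurableNeg G]
  {μ : Measure G} [μ.IsAddLeftInvariant] [μ.IsNegInvariant]

theorem setLIntegral_comp_sub_left_of_preimage_eq (g : G → ℝ≥0∞) {S : Set G} {h : G}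
    (hS : (h - ·) ⁻¹' S = S) : ∫⁻ η in S, g (h - η) ∂μ = ∫⁻ η in S, g η ∂μ := by
  conv_lhs => rw [← hS]
  exact (Measure.measurePreserving_sub_left μ h).setLIntegral_comp_preimage_emb
    (MeasurableEquiv.subLeft h).measurableEmbedding g S

theorem measure_mul_le_two_mul_setLIntegral {g : G → ℝ≥0∞} (hg : Measurable g) {S : Set G}
    {h : G} (hS : (h - ·) ⁻¹' S = S) (hsub : ∀ η, g h ≤ g η + g (h - η)) :
    μ S * g h ≤ 2 * ∫⁻ η in S, g η ∂μ :=
  calc μ S * g h = ∫⁻ _ in S, g h ∂μ := by rw [setLIntegral_const, mul_comm]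
    _ ≤ ∫⁻ η in S, (g η + g (h - η)) ∂μ := lintegral_mono hsub
    _ = 2 * ∫⁻ η in S, g η ∂μ := by
      rw [lintegral_add_left hg, setLIntegral_comp_sub_left_of_preimage_eq g hS, two_mul]

end Averaging

section Midpoint

variable {E : Type*} [NormedAddCommGroup E] [NormedSpace ℝ E] {h η : E}

theorem sub_preimage_ball_half (h : E) :
    (h - ·) ⁻¹' ball ((2 : ℝ)⁻¹ • h) (‖h‖ / 2) = ball ((2 : ℝ)⁻¹ • h) (‖h‖ / 2) := by
  ext η
  have : h - η - (2 : ℝ)⁻¹ • h = -(η - (2 : ℝ)⁻¹ • h) := by module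
  simp only [Set.mem_preimage, mem_ball, dist_eq_norm, this, norm_neg]

theorem norm_le_of_mem_ball_half (hη : η ∈ ball ((2 : ℝ)⁻¹ • h) (‖h‖ / 2)) : ‖η‖ ≤ ‖h‖ := by
  rw [mem_ball_iff_norm] at hη
  calc ‖η‖ ≤ ‖η - (2 : ℝ)⁻¹ • h‖ + ‖(2 : ℝ)⁻¹ • h‖ := norm_le_norm_sub_add _ _
    _ ≤ ‖h‖ := by rw [norm_smul]; norm_num at hη ⊢; linarith

theorem ne_zero_of_mem_ball_half (hη : η ∈ ball ((2 : ℝ)⁻¹ • h) (‖h‖ / 2)) : η ≠ 0 := by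
  rintro rfl
  rw [mem_ball_iff_norm, zero_sub, norm_neg, norm_smul] at hη
  norm_num at hη
  linarith

end Midpoint

section AddHaar

variable {E F : Type*} [NormedAddCommGroup E] [NormedSpace ℝ E] [FiniteDimensional ℝ E]
  [MeasurableSpace E] [BorelSpace E] {μ : Measure E} [μ.IsAddHaarMeasure]

theorem measure_ball_one_mul_le_lintegral_closedBall {g : E → ℝ≥0∞} (hg : Measurable g) {h : E}
    (hh : h ≠ 0) (hsub : ∀ η, g h ≤ g η + g (h - η)) :
    μ (ball 0 1) * g h ≤ 2 ^ (finrank ℝ E + 1) *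
      ∫⁻ η in closedBall 0 ‖h‖, ENNReal.ofReal (‖η‖ ^ (-(finrank ℝ E : ℝ))) * g η ∂μ := by
  set d := finrank ℝ E
  set S := ball ((2 : ℝ)⁻¹ • h) (‖h‖ / 2)
  set w : E → ℝ≥0∞ := fun η => ENNReal.ofReal (‖η‖ ^ (-(d : ℝ)))
  have hr : 0 < ‖h‖ / 2 := half_pos (norm_pos_iff.mpr hh)
  have hweight : ∀ η ∈ S, g η ≤ ENNReal.ofReal (‖h‖ ^ d) * (w η * g η) := fun η hηS => by
    have hη : 0 < ‖η‖ := norm_pos_iff.mpr (ne_zero_of_mem_ball_half hηS)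
    rw [← mul_assoc, ← ofReal_mul (by positivity)]
    refine le_mul_of_one_le_left' (one_le_ofReal.mpr ?_)
    rw [Real.rpow_neg hη.le, Real.rpow_natCast, ← div_eq_mul_inv, one_le_div (by positivity)]
    exact pow_le_pow_left₀ hη.le (norm_le_of_mem_ball_half hηS) d
  have hS : μ S * g h ≤ 2 * ENNReal.ofReal (‖h‖ ^ d) * ∫⁻ η in closedBall 0 ‖h‖, w η * g η ∂μ :=
    calc μ S * g h ≤ 2 * ∫⁻ η in S, g η ∂μ :=
          measure_mul_le_two_mul_setLIntegral hg (sub_preimage_ball_half h) hsub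
      _ ≤ 2 * ∫⁻ η in S, ENNReal.ofReal (‖h‖ ^ d) * (w η * g η) ∂μ := by
          gcongr 2 * ?_
          exact setLIntegral_mono' measurableSet_ball hweight
      _ ≤ 2 * ENNReal.ofReal (‖h‖ ^ d) * ∫⁻ η in closedBall 0 ‖h‖, w η * g η ∂μ := by
          rw [lintegral_const_mul' _ _ ofReal_ne_top, mul_assoc]
          gcongr
          exact fun η hη => mem_closedBall_zero_iff.mpr (norm_le_of_mem_ball_half hη)
  have hvol : μ S = ENNReal.ofReal ((‖h‖ / 2) ^ d) * μ (ball 0 1) :=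
    Measure.addHaar_ball_of_pos μ _ hr
  have hpow : 2 * ENNReal.ofReal (‖h‖ ^ d) = ENNReal.ofReal ((‖h‖ / 2) ^ d) * 2 ^ (d + 1) := by
    have hsplit : ‖h‖ ^ d = (‖h‖ / 2) ^ d * 2 ^ d := by
      rw [← mul_pow, div_mul_cancel₀ _ two_ne_zero]
    rw [hsplit, ofReal_mul (by positivity), ofReal_pow zero_le_two, ofReal_ofNat]
    ring
  rw [hvol, hpow, mul_assoc, mul_assoc] at hS
  exact (ENNReal.mul_le_mul_iff_right (by simpa using pow_pos hr d) ofReal_ne_top).mp hS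

theorem eLpNorm_fwdDiff_le_lintegral_closedBall [NormedAddCommGroup F] {p : ℝ≥0∞} (hp : 1 ≤ p)
    (hp_top : p ≠ ∞) {f : E → F} (hf : AEStronglyMeasurable f μ) {h : E} {t : ℝ} (ht : ‖h‖ ≤ t) :
    eLpNorm (Δ_[h] f) p μ ≤ 2 ^ (finrank ℝ E + 1) / μ (ball 0 1) *
      ∫⁻ η in closedBall 0 t,
        ENNReal.ofReal (‖η‖ ^ (-(finrank ℝ E : ℝ))) * eLpNorm (Δ_[η] f) p μ ∂μ := by
  rcases eq_or_ne h 0 with rfl | hh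
  · have hzero : Δ_[(0 : E)] f = 0 := by ext; simp [fwdDiff]
    simp [hzero]
  have hB0 : μ (ball 0 1) ≠ 0 := (measure_ball_pos μ 0 one_pos).ne'
  rw [← ENNReal.mul_div_right_comm,
    ENNReal.le_div_iff_mul_le (.inl hB0) (.inl measure_ball_lt_top.ne), mul_comm]
  refine (measure_ball_one_mul_le_lintegral_closedBall
    (measurable_eLpNorm_fwdDiff (by positivity) hp_top hf) hh fun η => ?_).trans ?_
  · simpa only [add_sub_cancel] using eLpNorm_fwdDiff_add_le hp hf η (h - η)
  · gcongr

end AddHaar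

/-- Modulus-of-continuity estimate: there is `N = N(d) > 0` such that for every
`f ∈ L_p(ℝ^d)` and every `t > 0`,
`ω(t, f)_p ≤ N ∫_{|η| ≤ t} |η|^{-d} ‖Δ_η f‖_{L_p} dη`, where
`ω(t, f)_p = sup_{|h| < t} ‖f(· + h) - f‖_{L_p}`. -/
theorem modulus_estimate (d : ℕ) :
    ∃ N : ℝ, 0 < N ∧ ∀ (p : ℝ), 1 ≤ p →
      ∀ f : EuclideanSpace ℝ (Fin d) → ℝ, MemLp f (ENNReal.ofReal p) →
      ∀ t : ℝ, 0 < t →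
        (⨆ h ∈ {h : EuclideanSpace ℝ (Fin d) | ‖h‖ < t},
            eLpNorm (fun x => f (x + h) - f x) (ENNReal.ofReal p) volume)
          ≤ ENNReal.ofReal N *
            ∫⁻ η in Metric.closedBall (0 : EuclideanSpace ℝ (Fin d)) t,
              ENNReal.ofReal (‖η‖ ^ (-(d : ℝ))) *
                eLpNorm (fun x => f (x + η) - f x) (ENNReal.ofReal p) volume := by
  set B := volume (ball (0 : EuclideanSpace ℝ (Fin d)) 1)
  have hC : 2 ^ (d + 1) / B ≠ ∞ :=
    ENNReal.div_ne_top (by simp) (measure_ball_pos volume 0 one_pos).ne'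
  refine ⟨(2 ^ (d + 1) / B).toReal,
    toReal_pos (ENNReal.div_pos (by simp) measure_ball_lt_top.ne).ne' hC, ?_⟩
  intro p hp f hf t _
  rw [ofReal_toReal hC]
  refine iSup₂_le fun h hh => ?_
  have key := eLpNorm_fwdDiff_le_lintegral_closedBall (μ := volume)
    (ofReal_one ▸ ofReal_le_ofReal hp) ofReal_ne_top hf.1 (le_of_lt hh)
  rwa [finrank_euclideanSpace_fin] at key
end

section
/- Let p, q ∈ [1, ∞), α ∈ (−1, q−1), and ℓ = 1 − (1+α)/q. There exists N = N(d, p, q, α) > 0 such that for every f : ℝ^d × [0, ∞) → ℝ that is continuously differentiable up to the boundary and satisfies ‖D_x f‖_{L_{p,q}(ℝ^{d+1}_+, μ)} < ∞, one has (∫_{ℝ^d} |h|^{−qℓ−d} ‖f(· + h, |h|) − f(·, |h|)‖_{L_p(ℝ^d)}^q dh)^{1/q} ≤ N ‖D_x f‖_{L_{p,q}(ℝ^{d+1}_+, μ)}, where D_x f denotes the gradient of f in the first d (horizontal) variables. -/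
open MeasureTheory ENNReal Set Module Metric

/-! For fixed `y = |h|`, the fundamental theorem of calculus along the segment from `x` to `x + h`,
Jensen's inequality in the segment parameter and translation invariance of Lebesgue measure give
`‖f(· + h, y) - f(·, y)‖_{L_p} ≤ |h| ‖D_x f(·, y)‖_{L_p}`. The `h`-integral of the resulting radial
function is bounded in polar coordinates, where the weight `|h|^{-qℓ-d+q}` times the Jacobian
`|h|^{d-1}` is exactly `|h|^α`, so `N = (d |B_1|)^{1/q} + 1` works. -/

theorem rpow_lintegral_le_lintegral_rpow {α : Type*} [MeasurableSpace α] (ν : Measure α)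
    [IsProbabilityMeasure ν] {F : α → ℝ≥0∞} (hF : AEMeasurable F ν) {r : ℝ} (hr : 1 ≤ r) :
    (∫⁻ a, F a ∂ν) ^ r ≤ ∫⁻ a, F a ^ r ∂ν := by
  have := eLpNorm'_le_eLpNorm'_of_exponent_le one_pos hr ν hF.aestronglyMeasurable
  simp only [eLpNorm', enorm_eq_self, rpow_one, div_one, one_div] at this
  calc (∫⁻ a, F a ∂ν) ^ r ≤ ((∫⁻ a, F a ^ r ∂ν) ^ r⁻¹) ^ r := by gcongr
    _ = ∫⁻ a, F a ^ r ∂ν := rpow_inv_rpow (by positivity) _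

theorem eLpNorm_ofReal_rpow {α F : Type*} [MeasurableSpace α] [NormedAddCommGroup F]
    (μ : Measure α) (u : α → F) {p : ℝ} (hp : 0 < p) (q : ℝ) :
    eLpNorm u (ENNReal.ofReal p) μ ^ q = (∫⁻ x, ENNReal.ofReal (‖u x‖ ^ p) ∂μ) ^ (q / p) := by
  rw [eLpNorm_eq_lintegral_rpow_enorm_toReal (by simpa) ofReal_ne_top, toReal_ofReal hp.le,
    ← rpow_mul, one_div_mul_eq_div]
  simp_rw [← ofReal_norm, ofReal_rpow_of_nonneg (norm_nonneg _) hp.le]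

section Difference

variable {E F : Type*} [NormedAddCommGroup E] [NormedSpace ℝ E] [NormedAddCommGroup F]
  [NormedSpace ℝ F]

theorem enorm_sub_le_lintegral_enorm_fderiv {g : E → F} (hg : ContDiff ℝ 1 g) (x h : E) :
    ‖g (x + h) - g x‖ₑ ≤ ∫⁻ t in Ioc (0 : ℝ) 1, ‖fderiv ℝ g (x + t • h)‖ₑ * ‖h‖ₑ := by
  have hline : ∀ t : ℝ, HasDerivAt (fun t : ℝ => g (x + t • h)) (fderiv ℝ g (x + t • h) h) t :=
    fun t => (hg.differentiable one_ne_zero _).hasFDerivAt.comp_hasDerivAt t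
      (((hasDerivAt_id t).smul_const h).const_add x |>.congr_deriv (one_smul ℝ h))
  have hB : Continuous fun t : ℝ => ‖fderiv ℝ g (x + t • h)‖ * ‖h‖ :=
    ((hg.continuous_fderiv one_ne_zero).comp (by fun_prop)).norm.mul continuous_const
  have hdisp := norm_sub_le_integral_of_norm_deriv_le_of_le zero_le_one
    (fun t _ => (hline t).continuousAt.continuousWithinAt)
    (fun t _ => (hline t).differentiableAt.differentiableWithinAt)
    (ae_of_all _ fun t _ => (hline t).deriv ▸ (fderiv ℝ g (x + t • h)).le_opNorm h)
    (hB.intervalIntegrable 0 1)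
  simp only [one_smul, zero_smul, add_zero, intervalIntegral.integral_of_le zero_le_one] at hdisp
  calc ‖g (x + h) - g x‖ₑ
      ≤ ENNReal.ofReal (∫ t in Ioc (0 : ℝ) 1, ‖fderiv ℝ g (x + t • h)‖ * ‖h‖) := by
        rw [← ofReal_norm]
        exact ofReal_le_ofReal hdisp
    _ = ∫⁻ t in Ioc (0 : ℝ) 1, ‖fderiv ℝ g (x + t • h)‖ₑ * ‖h‖ₑ := by
        rw [ofReal_integral_eq_lintegral_ofReal hB.integrableOn_Ioc
          (ae_of_all _ fun t => by positivity)]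
        simp only [ofReal_mul (norm_nonneg _), ofReal_norm]

theorem eLpNorm_sub_comp_add_le [MeasurableSpace E] [BorelSpace E] [SecondCountableTopology E]
    (μ : Measure E) [SFinite μ] [μ.IsAddRightInvariant] {g : E → F} (hg : ContDiff ℝ 1 g)
    {p : ℝ≥0∞} (hp : 1 ≤ p) (hp_top : p ≠ ∞) (h : E) :
    eLpNorm (fun x => g (x + h) - g x) p μ ≤ ‖h‖ₑ * eLpNorm (fderiv ℝ g) p μ := by
  have hr : 1 ≤ p.toReal := by simpa using toReal_mono hp_top hp
  have hr0 : 0 < p.toReal := zero_lt_one.trans_le hr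
  set r := p.toReal
  suffices ∫⁻ x, ‖g (x + h) - g x‖ₑ ^ r ∂μ ≤ ‖h‖ₑ ^ r * ∫⁻ x, ‖fderiv ℝ g x‖ₑ ^ r ∂μ by
    rw [eLpNorm_eq_lintegral_rpow_enorm_toReal (by positivity) hp_top,
      eLpNorm_eq_lintegral_rpow_enorm_toReal (by positivity) hp_top]
    calc (∫⁻ x, ‖g (x + h) - g x‖ₑ ^ r ∂μ) ^ (1 / r)
        ≤ (‖h‖ₑ ^ r * ∫⁻ x, ‖fderiv ℝ g x‖ₑ ^ r ∂μ) ^ (1 / r) := by gcongr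
      _ = ‖h‖ₑ * (∫⁻ x, ‖fderiv ℝ g x‖ₑ ^ r ∂μ) ^ (1 / r) := by
        rw [mul_rpow_of_nonneg _ _ (by positivity), ← rpow_mul, mul_one_div_cancel hr0.ne',
          rpow_one]
  have hD : Continuous fun w : E × ℝ => ‖fderiv ℝ g (w.1 + w.2 • h)‖ₑ * ‖h‖ₑ :=
    (ENNReal.continuous_mul_const enorm_ne_top).comp
      ((hg.continuous_fderiv one_ne_zero).comp (by fun_prop)).enorm
  have : IsProbabilityMeasure (volume.restrict (Ioc (0 : ℝ) 1)) := ⟨by simp⟩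
  calc ∫⁻ x, ‖g (x + h) - g x‖ₑ ^ r ∂μ
      ≤ ∫⁻ x, (∫⁻ t in Ioc (0 : ℝ) 1, (‖fderiv ℝ g (x + t • h)‖ₑ * ‖h‖ₑ) ^ r) ∂μ :=
        lintegral_mono fun x => (rpow_le_rpow (enorm_sub_le_lintegral_enorm_fderiv hg x h)
          hr0.le).trans <| rpow_lintegral_le_lintegral_rpow _
            (hD.comp (continuous_const.prodMk continuous_id)).measurable.aemeasurable hr
    _ = ∫⁻ t in Ioc (0 : ℝ) 1, (∫⁻ x, (‖fderiv ℝ g (x + t • h)‖ₑ * ‖h‖ₑ) ^ r ∂μ) :=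
        lintegral_lintegral_swap (continuous_rpow_const.comp hD).measurable.aemeasurable
    _ = ∫⁻ t in Ioc (0 : ℝ) 1, (∫⁻ x, (‖fderiv ℝ g x‖ₑ * ‖h‖ₑ) ^ r ∂μ) := by
        simp_rw [lintegral_add_right_eq_self (fun x => (‖fderiv ℝ g x‖ₑ * ‖h‖ₑ) ^ r)]
    _ = ‖h‖ₑ ^ r * ∫⁻ x, ‖fderiv ℝ g x‖ₑ ^ r ∂μ := by
        simp [mul_rpow_of_nonneg _ _ hr0.le, mul_comm,
          lintegral_const_mul' _ _ (rpow_ne_top_of_nonneg hr0.le enorm_ne_top)]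

theorem eLpNorm_sub_comp_add_rpow_le [MeasurableSpace E] [BorelSpace E]
    [SecondCountableTopology E] (μ : Measure E) [SFinite μ] [μ.IsAddRightInvariant] {g : E → F}
    (hg : ContDiff ℝ 1 g) {p q : ℝ} (hp : 1 ≤ p) (hq : 0 ≤ q) (h : E) :
    eLpNorm (fun x => g (x + h) - g x) (ENNReal.ofReal p) μ ^ q ≤
      ENNReal.ofReal (‖h‖ ^ q) * (∫⁻ x, ENNReal.ofReal (‖fderiv ℝ g x‖ ^ p) ∂μ) ^ (q / p) := by
  calc _ ≤ (‖h‖ₑ * eLpNorm (fderiv ℝ g) (ENNReal.ofReal p) μ) ^ q :=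
        rpow_le_rpow (eLpNorm_sub_comp_add_le μ hg (one_le_ofReal.2 hp) ofReal_ne_top h) hq
    _ = _ := by
        rw [mul_rpow_of_nonneg _ _ hq, eLpNorm_ofReal_rpow _ _ (zero_lt_one.trans_le hp),
          ← ofReal_norm, ofReal_rpow_of_nonneg (norm_nonneg _) hq]

end Difference

section Polar

variable {E : Type*} [NormedAddCommGroup E] [NormedSpace ℝ E] [MeasurableSpace E] [BorelSpace E]
  [FiniteDimensional ℝ E] [Nontrivial E] (μ : Measure E) [μ.IsAddHaarMeasure]

/-- Valid for non-measurable `g`, since Tonelli is only used as `lintegral_prod_le`. -/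
theorem lintegral_comp_norm_le (g : ℝ → ℝ≥0∞) :
    ∫⁻ x, g ‖x‖ ∂μ ≤ finrank ℝ E * μ (ball 0 1) *
      ∫⁻ r in Ioi (0 : ℝ), ENNReal.ofReal (r ^ (finrank ℝ E - 1)) * g r :=
  calc ∫⁻ x, g ‖x‖ ∂μ = ∫⁻ x : ({0}ᶜ : Set E), g ‖x.1‖ ∂μ.comap (↑) := by
        rw [lintegral_subtype_comap (measurableSet_singleton _).compl fun x => g ‖x‖,
          restrict_compl_singleton]
    _ = ∫⁻ x, g x.2 ∂μ.toSphere.prod (.volumeIoiPow (finrank ℝ E - 1)) := by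
        simpa using μ.measurePreserving_homeomorphUnitSphereProd.lintegral_comp_emb
          (Homeomorph.measurableEmbedding _) (g ∘ Subtype.val ∘ Prod.snd)
    _ ≤ ∫⁻ _, ∫⁻ r, g r ∂.volumeIoiPow (finrank ℝ E - 1) ∂μ.toSphere := lintegral_prod_le _
    _ = _ := by
        rw [lintegral_const, μ.toSphere_apply_univ, Measure.volumeIoiPow,
          lintegral_withDensity_eq_lintegral_mul_non_measurable _
            (measurable_subtype_coe.pow_const _).ennreal_ofReal
            (ae_of_all _ fun _ => ofReal_lt_top), mul_comm]
        exact congrArg _ (lintegral_subtype_comap measurableSet_Ioi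
          fun r => ENNReal.ofReal (r ^ (finrank ℝ E - 1)) * g r)

theorem lintegral_rpow_norm_mul_comp_norm_le (γ : ℝ) (g : ℝ → ℝ≥0∞) :
    ∫⁻ x, ENNReal.ofReal (‖x‖ ^ (γ - finrank ℝ E)) * g ‖x‖ ∂μ ≤
      finrank ℝ E * μ (ball 0 1) * ∫⁻ r in Ioi (0 : ℝ), g r * ENNReal.ofReal (r ^ (γ - 1)) := by
  refine (lintegral_comp_norm_le μ
    fun r => ENNReal.ofReal (r ^ (γ - finrank ℝ E)) * g r).trans_eq ?_
  congr 1
  refine setLIntegral_congr_fun measurableSet_Ioi fun r (hr : 0 < r) => ?_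
  rw [← mul_assoc, ← ofReal_mul (by positivity), ← Real.rpow_natCast, ← Real.rpow_add hr,
    Nat.cast_pred finrank_pos, mul_comm]
  ring_nf

end Polar

theorem ContDiffOn.contDiff_horizontal_slice {E F : Type*} [NormedAddCommGroup E]
    [NormedSpace ℝ E] [NormedAddCommGroup F] [NormedSpace ℝ F] {n : WithTop ℕ∞} {f : E × ℝ → F}
    (hf : ContDiffOn ℝ n f (univ ×ˢ Ici 0)) {y : ℝ} (hy : 0 < y) :
    ContDiff ℝ n fun z => f (z, y) :=
  contDiff_iff_contDiffAt.2 fun z =>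
    (hf.contDiffAt (prod_mem_nhds Filter.univ_mem (Ici_mem_nhds hy))).comp z
      (contDiffAt_id.prodMk contDiffAt_const)

theorem ofReal_rpow_norm_mul_eLpNorm_horizontal_sub_le {E F : Type*} [NormedAddCommGroup E]
    [NormedSpace ℝ E] [MeasurableSpace E] [BorelSpace E] [SecondCountableTopology E]
    [NormedAddCommGroup F] [NormedSpace ℝ F] (μ : Measure E) [SFinite μ] [μ.IsAddRightInvariant]
    {f : E × ℝ → F} (hf : ContDiffOn ℝ 1 f (univ ×ˢ Ici 0)) {p q : ℝ} (hp : 1 ≤ p) (hq : 0 < q)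
    (β : ℝ) (h : E) :
    ENNReal.ofReal (‖h‖ ^ β) *
        eLpNorm (fun x => f (x + h, ‖h‖) - f (x, ‖h‖)) (ENNReal.ofReal p) μ ^ q ≤
      ENNReal.ofReal (‖h‖ ^ (β + q)) *
        (∫⁻ x, ENNReal.ofReal (‖fderiv ℝ (fun z => f (z, ‖h‖)) x‖ ^ p) ∂μ) ^ (q / p) := by
  rcases eq_or_ne h 0 with rfl | hne
  · simp [zero_rpow_of_pos hq]
  have hpos : 0 < ‖h‖ := norm_pos_iff.2 hne
  rw [Real.rpow_add hpos, ofReal_mul (by positivity), mul_assoc]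
  gcongr
  exact eLpNorm_sub_comp_add_rpow_le μ (hf.contDiff_horizontal_slice hpos) hp hq.le h

theorem trace_horizontal_difference_general (d : ℕ) (p q α : ℝ) (hp : 1 ≤ p) (hq : 1 ≤ q)
    (ℓ : ℝ) (hℓ : ℓ = 1 - (1 + α) / q) :
    ∃ N : ℝ, 0 < N ∧ ∀ f : EuclideanSpace ℝ (Fin d) × ℝ → ℝ,
      ContDiffOn ℝ 1 f (Set.univ ×ˢ Set.Ici 0) →
      (∫⁻ y in Set.Ioi (0 : ℝ),
          (∫⁻ x, ENNReal.ofReal (‖fderiv ℝ (fun z => f (z, y)) x‖ ^ p)) ^ (q / p) *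
            ENNReal.ofReal (y ^ α)) ≠ ⊤ →
      (∫⁻ h : EuclideanSpace ℝ (Fin d),
          ENNReal.ofReal (‖h‖ ^ (-(q * ℓ) - d)) *
            eLpNorm (fun x => f (x + h, ‖h‖) - f (x, ‖h‖)) (ENNReal.ofReal p) volume ^ q)
            ^ (1 / q)
        ≤ ENNReal.ofReal N *
          (∫⁻ y in Set.Ioi (0 : ℝ),
            (∫⁻ x, ENNReal.ofReal (‖fderiv ℝ (fun z => f (z, y)) x‖ ^ p)) ^ (q / p) *
              ENNReal.ofReal (y ^ α)) ^ (1 / q) := by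
  have hq0 : 0 < q := zero_lt_one.trans_le hq
  rcases Nat.eq_zero_or_pos d with rfl | hd
  · refine ⟨1, one_pos, fun f _ _ => ?_⟩
    simp [Subsingleton.elim _ (0 : EuclideanSpace ℝ (Fin 0)), zero_rpow_of_pos hq0,
      zero_rpow_of_pos (inv_pos.2 hq0)]
  have : Nontrivial (EuclideanSpace ℝ (Fin d)) :=
    nontrivial_of_finrank_pos (R := ℝ) (by simpa using hd)
  set C : ℝ≥0∞ := d * volume (ball (0 : EuclideanSpace ℝ (Fin d)) 1)
  have hC : C ^ (1 / q) ≠ ∞ :=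
    rpow_ne_top_of_nonneg (by positivity) (mul_ne_top (natCast_ne_top d) measure_ball_lt_top.ne)
  refine ⟨(C ^ (1 / q)).toReal + 1, by positivity, fun f hf _ => ?_⟩
  set Φ : ℝ → ℝ≥0∞ := fun y =>
    (∫⁻ x, ENNReal.ofReal (‖fderiv ℝ (fun z => f (z, y)) x‖ ^ p)) ^ (q / p)
  have hexp : -(q * ℓ) - d + q = α + 1 - d := by
    rw [hℓ]
    field_simp
    ring
  calc _ ≤ (∫⁻ h : EuclideanSpace ℝ (Fin d), ENNReal.ofReal (‖h‖ ^ (α + 1 - d)) * Φ ‖h‖)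
          ^ (1 / q) :=
        rpow_le_rpow (lintegral_mono fun h =>
          (ofReal_rpow_norm_mul_eLpNorm_horizontal_sub_le volume hf hp hq0 _ h).trans_eq
            (by rw [hexp])) (by positivity)
    _ ≤ (C * ∫⁻ r in Ioi (0 : ℝ), Φ r * ENNReal.ofReal (r ^ α)) ^ (1 / q) := by
        gcongr
        simpa [C] using lintegral_rpow_norm_mul_comp_norm_le
          (volume : Measure (EuclideanSpace ℝ (Fin d))) (α + 1) Φ
    _ ≤ _ := by
        rw [mul_rpow_of_nonneg _ _ (by positivity)]
        gcongr
        exact (le_ofReal_iff_toReal_le hC (by positivity)).2 (le_add_of_nonneg_right zero_le_one)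

/-- Horizontal-difference estimate: for `f : ℝ^d × [0,∞) → ℝ` continuously
differentiable up to the boundary whose horizontal gradient `D_x f` lies in
`L_{p,q}(ℝ^{d+1}₊, y^α dx dy)`, one has
`(∫_{ℝ^d} |h|^{-qℓ-d} ‖f(·+h,|h|) - f(·,|h|)‖_{L_p}^q dh)^{1/q} ≤ N ‖D_x f‖_{L_{p,q}}`,
with `ℓ = 1 - (1+α)/q` and `N = N(d, p, q, α)`. -/
theorem trace_horizontal_difference (d : ℕ) (p q α : ℝ) (hp : 1 ≤ p) (hq : 1 ≤ q)
    (hα1 : -1 < α) (hα2 : α < q - 1) (ℓ : ℝ) (hℓ : ℓ = 1 - (1 + α) / q) :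
    ∃ N : ℝ, 0 < N ∧ ∀ f : EuclideanSpace ℝ (Fin d) × ℝ → ℝ,
      ContDiffOn ℝ 1 f (Set.univ ×ˢ Set.Ici 0) →
      (∫⁻ y in Set.Ioi (0 : ℝ),
          (∫⁻ x, ENNReal.ofReal (‖fderiv ℝ (fun z => f (z, y)) x‖ ^ p)) ^ (q / p) *
            ENNReal.ofReal (y ^ α)) ≠ ⊤ →
      (∫⁻ h : EuclideanSpace ℝ (Fin d),
          ENNReal.ofReal (‖h‖ ^ (-(q * ℓ) - d)) *
            eLpNorm (fun x => f (x + h, ‖h‖) - f (x, ‖h‖)) (ENNReal.ofReal p) volume ^ q)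
            ^ (1 / q)
        ≤ ENNReal.ofReal N *
          (∫⁻ y in Set.Ioi (0 : ℝ),
            (∫⁻ x, ENNReal.ofReal (‖fderiv ℝ (fun z => f (z, y)) x‖ ^ p)) ^ (q / p) *
              ENNReal.ofReal (y ^ α)) ^ (1 / q) :=
  trace_horizontal_difference_general d p q α hp hq ℓ hℓ
end
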